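/- arXiv:1709.03424 — 9 statements merged into one kernel-verified Lean document; each statement's English description precedes it below -/
import Mathlib

section
/- For all natural numbers m, n, w, d with n ≥ 2 and d ≥ w + 1, A(m,n,w,d) ≤ A(m,n−1,w,d−w). -/
open Finset

/-- Total Hamming distance between two words in `J(m,w)^n`:
the number of positions (among all `m·n` entries) in which they differ. -/
def arrDist {m n : ℕ} (X Y : Fin n → Fin m → ZMod 2) : ℕ :=
  ∑ k, hammingDist (X k) (Y k)

/-- `C` is a constant-weight array code in `J(m,w)^n` with minimum distance `2d`. -/
def isCWAC (m n w d : ℕ) (C : Finset (Fin n → Fin m → ZMod 2)) : Prop :=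
  C.Nonempty ∧ (∀ X ∈ C, ∀ k, hammingNorm (X k) = w) ∧
    ∀ X ∈ C, ∀ Y ∈ C, X ≠ Y → 2 * d ≤ arrDist X Y

/-- Maximum cardinality of a CWAC in `J(m,w)^n` with minimum Hamming distance `2d`. -/
noncomputable def Amax (m n w d : ℕ) : ℕ :=
  sSup { c | ∃ C : Finset (Fin n → Fin m → ZMod 2), isCWAC m n w d C ∧ C.card = c }

/-- Maximum cardinality of an anticode in `J(m,w)^n` with diameter `2δ`. -/
noncomputable def alphaMax (m n w δ : ℕ) : ℕ :=
  sSup { c | ∃ C : Finset (Fin n → Fin m → ZMod 2), C.Nonempty ∧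
    (∀ X ∈ C, ∀ k, hammingNorm (X k) = w) ∧
    (∀ X ∈ C, ∀ Y ∈ C, arrDist X Y ≤ 2 * δ) ∧ C.card = c }

/-- Maximum cardinality of a binary constant-weight code in `J(n,w)` with
minimum Hamming distance `2d`. -/
noncomputable def Bmax (n w d : ℕ) : ℕ :=
  sSup { c | ∃ C : Finset (Fin n → ZMod 2), C.Nonempty ∧
    (∀ x ∈ C, hammingNorm x = w) ∧
    (∀ x ∈ C, ∀ y ∈ C, x ≠ y → 2 * d ≤ hammingDist x y) ∧ C.card = c }

/-- Maximum cardinality of a nonrestricted `q`-ary code of length `n` with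
minimum Hamming distance `d`. -/
noncomputable def Cmax (q n d : ℕ) : ℕ :=
  sSup { c | ∃ C : Finset (Fin n → Fin q), C.Nonempty ∧
    (∀ x ∈ C, ∀ y ∈ C, x ≠ y → d ≤ hammingDist x y) ∧ C.card = c }

/-- `ν(i)`: the number of vectors of weight `u` at Hamming distance `i` from a
fixed vector of weight `w` in `GF(2)^m`. -/
def nuF (m w u : ℕ) (i : ℕ) : ℕ :=
  if (u + w - i) % 2 = 0 ∧ i ≤ u + w ∧ w ≤ u + i then
    Nat.choose w ((u + w - i) / 2) * Nat.choose (m - w) ((u + i - w) / 2)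
  else 0

theorem singleton_bound_CWAC (m n w d : ℕ) (hn : 2 ≤ n) (hd : w + 1 ≤ d) :
    Amax m n w d ≤ Amax m (n - 1) w (d - w) := by
  obtain ⟨N, rfl⟩ : ∃ N, n = N + 1 := ⟨n - 1, by omega⟩
  simp only [Nat.add_sub_cancel]
  refine csSup_le' ?_
  rintro c ⟨C, ⟨hne, hwt, hdist⟩, rfl⟩
  set r : (Fin (N + 1) → Fin m → ZMod 2) → (Fin N → Fin m → ZMod 2) :=
    fun X k => X k.castSucc with hr
  have hbound : ∀ X ∈ C, ∀ Y ∈ C,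
      hammingDist (X (Fin.last N)) (Y (Fin.last N)) ≤ 2 * w := by
    intro X hX Y hY
    calc hammingDist (X (Fin.last N)) (Y (Fin.last N))
        ≤ hammingDist (X (Fin.last N)) 0 + hammingDist 0 (Y (Fin.last N)) :=
          hammingDist_triangle _ _ _
      _ = hammingNorm (X (Fin.last N)) + hammingNorm (Y (Fin.last N)) := by
          rw [hammingDist_zero_right, hammingDist_zero_left]
      _ = 2 * w := by rw [hwt X hX (Fin.last N), hwt Y hY (Fin.last N)]; ring
  have hsplit : ∀ X Y : Fin (N + 1) → Fin m → ZMod 2,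
      arrDist X Y = arrDist (r X) (r Y)
        + hammingDist (X (Fin.last N)) (Y (Fin.last N)) := by
    intro X Y
    simp [arrDist, Fin.sum_univ_castSucc, hr]
  have hinj : Set.InjOn r C := by
    intro X hX Y hY hXY
    by_contra hne'
    have h1 := hdist X hX Y hY hne'
    have h2 := hsplit X Y
    have h3 : arrDist (r X) (r Y) = 0 := by
      rw [hXY]
      simp [arrDist]
    have h4 := hbound X hX Y hY
    omega
  have hcard : (C.image r).card = C.card := Finset.card_image_of_injOn hinj
  refine le_csSup ?_ ?_
  · refine ⟨Fintype.card (Fin N → Fin m → ZMod 2), ?_⟩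
    rintro c ⟨D, -, rfl⟩
    exact D.card_le_univ
  · refine ⟨C.image r, ⟨hne.image r, ?_, ?_⟩, hcard⟩
    · rintro X hX k
      obtain ⟨Y, hY, rfl⟩ := Finset.mem_image.mp hX
      exact hwt Y hY _
    · rintro X hX Y hY hXY
      obtain ⟨X', hX', rfl⟩ := Finset.mem_image.mp hX
      obtain ⟨Y', hY', rfl⟩ := Finset.mem_image.mp hY
      have hne' : X' ≠ Y' := fun h => hXY (by rw [h])
      have h1 := hdist X' hX' Y' hY' hne'
      have h2 := hsplit X' Y'
      have h4 := hbound X' hX' Y' hY'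
      omega
end

section
/- Let m, n, w, d, l, v, δ be natural numbers with 1 ≤ w < m, l ∣ n, 1 ≤ v ≤ l, v ≤ l·w, δ ≤ d, and δ ≤ (n/l)·min(v, l−v). Then α(l, n/l, v, δ) · w^(n·v/l) · (m−w)^(n − n·v/l) · A(m, n, w, d) ≤ m^n · A((m−1)·l, n/l, l·w − v, d − δ). -/
open Finset

open Finset

private lemma zmod2_ne (z : ZMod 2) : z ≠ 0 ↔ z = 1 := by revert z; decide

private lemma zmod2_cases (z : ZMod 2) : z = 0 ∨ z = 1 := by revert z; decide

private lemma zmod2_ind {z z' : ZMod 2}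
    (h : (if z ≠ 0 then (1:ℕ) else 0) = if z' ≠ 0 then 1 else 0) : z = z' := by
  revert h; revert z z'; decide

private lemma dist_eq_sum {N : ℕ} (x y : Fin N → ZMod 2) :
    hammingDist x y = ∑ i, if x i ≠ y i then 1 else 0 := by
  rw [hammingDist, Finset.card_filter]

private lemma norm_eq_sum {N : ℕ} (x : Fin N → ZMod 2) :
    hammingNorm x = ∑ i, if x i ≠ 0 then 1 else 0 := by
  rw [hammingNorm, Finset.card_filter]

private lemma dist_succAbove {M : ℕ} (j : Fin (M+1)) (x y : Fin (M+1) → ZMod 2) :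
    hammingDist x y
      = (if x j ≠ y j then 1 else 0) + hammingDist (x ∘ j.succAbove) (y ∘ j.succAbove) := by
  rw [dist_eq_sum, dist_eq_sum,
    Fin.sum_univ_succAbove (fun i => if x i ≠ y i then 1 else 0) j]
  rfl

private lemma norm_succAbove {M : ℕ} (j : Fin (M+1)) (x : Fin (M+1) → ZMod 2) :
    hammingNorm x = (if x j ≠ 0 then 1 else 0) + hammingNorm (x ∘ j.succAbove) := by
  rw [norm_eq_sum, norm_eq_sum,
    Fin.sum_univ_succAbove (fun i => if x i ≠ 0 then 1 else 0) j]
  rfl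

private lemma indicator_norm (m w : ℕ) (h : w ≤ m) :
    hammingNorm (fun i : Fin m => if (i : ℕ) < w then (1 : ZMod 2) else 0) = w := by
  rw [hammingNorm]
  have h1 : ({i | (if ((i : Fin m) : ℕ) < w then (1 : ZMod 2) else 0) ≠ 0} : Finset (Fin m))
      = univ.map (Fin.castLEEmb h) := by
    ext i
    simp only [mem_filter, mem_univ, true_and, mem_map, Fin.castLEEmb_apply]
    constructor
    · intro hi
      by_cases hiw : (i : ℕ) < w
      · exact ⟨⟨i, hiw⟩, by ext; simp⟩
      · simp [hiw] at hi
    · rintro ⟨j, rfl⟩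
      simp [j.isLt]
  rw [h1, Finset.card_map, Finset.card_univ, Fintype.card_fin]

private lemma amax_bdd (m n w d : ℕ) :
    BddAbove { c | ∃ C : Finset (Fin n → Fin m → ZMod 2), isCWAC m n w d C ∧ C.card = c } := by
  refine ⟨Fintype.card (Fin n → Fin m → ZMod 2), ?_⟩
  rintro c ⟨C, _, rfl⟩
  exact Finset.card_le_univ C

private lemma card_le_amax {m n w d : ℕ} {C : Finset (Fin n → Fin m → ZMod 2)}
    (h : isCWAC m n w d C) : C.card ≤ Amax m n w d :=
  le_csSup (amax_bdd m n w d) ⟨C, h, rfl⟩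

private lemma amax_spec (m n w d : ℕ) (hw : w ≤ m) :
    ∃ C : Finset (Fin n → Fin m → ZMod 2), isCWAC m n w d C ∧ C.card = Amax m n w d := by
  have hne : { c | ∃ C : Finset (Fin n → Fin m → ZMod 2), isCWAC m n w d C ∧ C.card = c }.Nonempty := by
    refine ⟨1, ({fun (_ : Fin n) (i : Fin m) => if (i : ℕ) < w then (1 : ZMod 2) else 0} : Finset (Fin n → Fin m → ZMod 2)), ⟨⟨_, mem_singleton_self _⟩, ?_, ?_⟩, rfl⟩
    · intro X hX k
      rw [mem_singleton] at hX; subst hX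
      exact indicator_norm m w hw
    · intro X hX Y hY hXY
      rw [mem_singleton] at hX hY; exact absurd (hX.trans hY.symm) hXY
  have := Nat.sSup_mem hne (amax_bdd m n w d)
  obtain ⟨C, hC, hc⟩ := this
  exact ⟨C, hC, hc⟩

private lemma alpha_spec (m n w δ : ℕ) (hw : w ≤ m) :
    ∃ C : Finset (Fin n → Fin m → ZMod 2), C.Nonempty ∧
      (∀ X ∈ C, ∀ k, hammingNorm (X k) = w) ∧
      (∀ X ∈ C, ∀ Y ∈ C, arrDist X Y ≤ 2 * δ) ∧ C.card = alphaMax m n w δ := by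
  have hne : { c | ∃ C : Finset (Fin n → Fin m → ZMod 2), C.Nonempty ∧
      (∀ X ∈ C, ∀ k, hammingNorm (X k) = w) ∧
      (∀ X ∈ C, ∀ Y ∈ C, arrDist X Y ≤ 2 * δ) ∧ C.card = c }.Nonempty := by
    refine ⟨1, ({fun (_ : Fin n) (i : Fin m) => if (i : ℕ) < w then (1 : ZMod 2) else 0} : Finset (Fin n → Fin m → ZMod 2)), ⟨_, mem_singleton_self _⟩, ?_, ?_, rfl⟩
    · intro X hX k
      rw [mem_singleton] at hX; subst hX
      exact indicator_norm m w hw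
    · intro X hX Y hY
      rw [mem_singleton] at hX hY; subst hX; subst hY
      simp [arrDist]
  have hbdd : BddAbove { c | ∃ C : Finset (Fin n → Fin m → ZMod 2), C.Nonempty ∧
      (∀ X ∈ C, ∀ k, hammingNorm (X k) = w) ∧
      (∀ X ∈ C, ∀ Y ∈ C, arrDist X Y ≤ 2 * δ) ∧ C.card = c } := by
    refine ⟨Fintype.card (Fin n → Fin m → ZMod 2), ?_⟩
    rintro c ⟨C, _, _, _, rfl⟩
    exact Finset.card_le_univ C
  have := Nat.sSup_mem hne hbdd
  obtain ⟨C, h1, h2, h3, h4⟩ := this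
  exact ⟨C, h1, h2, h3, h4⟩
private def Phi {M l t : ℕ} (e : Fin (l*t) ≃ Fin t × Fin l) (f : Fin (l*t) → Fin (M+1))
    (X : Fin (l*t) → Fin (M+1) → ZMod 2) : Fin t → Fin (M*l) → ZMod 2 :=
  fun b i => X (e.symm (b, (finProdFinEquiv.symm i).2))
    ((f (e.symm (b, (finProdFinEquiv.symm i).2))).succAbove (finProdFinEquiv.symm i).1)

private lemma Phi_dist {M l t : ℕ} (e : Fin (l*t) ≃ Fin t × Fin l)
    (f : Fin (l*t) → Fin (M+1)) (X X' : Fin (l*t) → Fin (M+1) → ZMod 2) (b : Fin t) :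
    hammingDist (Phi e f X b) (Phi e f X' b)
      = ∑ c, hammingDist (X (e.symm (b,c)) ∘ (f (e.symm (b,c))).succAbove)
                         (X' (e.symm (b,c)) ∘ (f (e.symm (b,c))).succAbove) := by
  rw [dist_eq_sum, ← Equiv.sum_comp (finProdFinEquiv)
    (fun i => if Phi e f X b i ≠ Phi e f X' b i then 1 else 0), Fintype.sum_prod_type,
    Finset.sum_comm]
  refine Finset.sum_congr rfl fun c _ => ?_
  rw [dist_eq_sum]
  refine Finset.sum_congr rfl fun r _ => ?_
  simp [Phi, Function.comp]

private lemma Phi_norm {M l t : ℕ} (e : Fin (l*t) ≃ Fin t × Fin l)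
    (f : Fin (l*t) → Fin (M+1)) (X : Fin (l*t) → Fin (M+1) → ZMod 2) (b : Fin t) :
    hammingNorm (Phi e f X b)
      = ∑ c, hammingNorm (X (e.symm (b,c)) ∘ (f (e.symm (b,c))).succAbove) := by
  rw [norm_eq_sum, ← Equiv.sum_comp (finProdFinEquiv)
    (fun i => if Phi e f X b i ≠ 0 then 1 else 0), Fintype.sum_prod_type,
    Finset.sum_comm]
  refine Finset.sum_congr rfl fun c _ => ?_
  rw [norm_eq_sum]
  refine Finset.sum_congr rfl fun r _ => ?_
  simp [Phi, Function.comp]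

private lemma sum_blocks {l t : ℕ} (e : Fin (l*t) ≃ Fin t × Fin l) (F : Fin (l*t) → ℕ) :
    ∑ b, ∑ c, F (e.symm (b, c)) = ∑ k, F k := by
  exact (Fintype.sum_prod_type (f := fun z : Fin t × Fin l => F (e.symm z))).symm.trans
    (Equiv.sum_comp e.symm F)

private lemma count_f {M l t w v : ℕ}
    (e : Fin (l*t) ≃ Fin t × Fin l)
    (X : Fin (l*t) → Fin (M+1) → ZMod 2) (hX : ∀ k, hammingNorm (X k) = w)
    (P : Fin t → Fin l → ZMod 2) (hP : ∀ b, hammingNorm (P b) = v) :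
    ((univ : Finset (Fin (l*t) → Fin (M+1))).filter
        (fun f => ∀ k, X k (f k) = P (e k).1 (e k).2)).card
      = w ^ (t*v) * (M+1-w) ^ (l*t - t*v) := by
  have hnormfilter : ∀ k, (univ.filter (fun j => X k j ≠ 0)).card = w := fun k => hX k
  have hset : (univ : Finset (Fin (l*t) → Fin (M+1))).filter
        (fun f => ∀ k, X k (f k) = P (e k).1 (e k).2)
      = Fintype.piFinset (fun k => univ.filter (fun j => X k j = P (e k).1 (e k).2)) := by
    ext f; simp [Fintype.mem_piFinset]
  rw [hset, Fintype.card_piFinset]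
  have hcard : ∀ k, (univ.filter (fun j => X k j = P (e k).1 (e k).2)).card
      = if P (e k).1 (e k).2 = 1 then w else M+1-w := by
    intro k
    rcases zmod2_cases (P (e k).1 (e k).2) with h | h <;> rw [h]
    · rw [if_neg (by decide : ¬ ((0:ZMod 2) = 1))]
      have h2 : (univ.filter (fun j => X k j = 0))
          = univ \ univ.filter (fun j => X k j ≠ 0) := by
        rw [← Finset.filter_not]
        exact Finset.filter_congr (fun j _ => by simp)
      rw [h2, Finset.card_sdiff_of_subset (Finset.filter_subset _ _), hnormfilter k,
        Finset.card_univ, Fintype.card_fin]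
    · rw [if_pos rfl, ← hnormfilter k]
      exact congrArg Finset.card (Finset.filter_congr (fun j _ => (zmod2_ne (X k j)).symm))
  calc ∏ k, (univ.filter (fun j => X k j = P (e k).1 (e k).2)).card
      = ∏ k, if P (e k).1 (e k).2 = 1 then w else M+1-w :=
        Finset.prod_congr rfl fun k _ => hcard k
    _ = w ^ (t*v) * (M+1-w) ^ (l*t - t*v) := by
        rw [Finset.prod_ite (fun _ => w) (fun _ => M+1-w), Finset.prod_const, Finset.prod_const]
        have hone : (univ.filter (fun k => P (e k).1 (e k).2 = 1)).card = t * v := by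
          rw [Finset.card_filter]
          rw [← Equiv.sum_comp e.symm (fun k => if P (e k).1 (e k).2 = 1 then 1 else 0)]
          simp only [Equiv.apply_symm_apply]
          rw [Fintype.sum_prod_type]
          have : ∀ b, (∑ c, if P b c = 1 then 1 else 0) = v := by
            intro b
            rw [← hP b, norm_eq_sum]
            exact Finset.sum_congr rfl fun c _ => if_congr (zmod2_ne _).symm rfl rfl
          rw [Finset.sum_congr rfl fun b _ => this b]
          simp [Finset.sum_const, Finset.card_univ]
        have hnot : (univ.filter (fun k => ¬ P (e k).1 (e k).2 = 1)).card = l*t - t*v := by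
          rw [Finset.filter_not, Finset.card_sdiff_of_subset (Finset.filter_subset _ _), hone,
            Finset.card_univ, Fintype.card_fin]
        rw [hone, hnot]
private lemma fiber_bound {M l t w v d δ : ℕ}
    (e : Fin (l*t) ≃ Fin t × Fin l)
    (C : Finset (Fin (l*t) → Fin (M+1) → ZMod 2))
    (hCw : ∀ X ∈ C, ∀ k, hammingNorm (X k) = w)
    (hCd : ∀ X ∈ C, ∀ Y ∈ C, X ≠ Y → 2*d ≤ arrDist X Y)
    (D : Finset (Fin t → Fin l → ZMod 2))
    (hDw : ∀ P ∈ D, ∀ b, hammingNorm (P b) = v)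
    (hDdiam : ∀ P ∈ D, ∀ Q ∈ D, arrDist P Q ≤ 2*δ)
    (f : Fin (l*t) → Fin (M+1)) :
    ((C ×ˢ D).filter (fun z => ∀ k, z.1 k (f k) = z.2 (e k).1 (e k).2)).card
      ≤ Amax (M*l) t (l*w - v) (d - δ) := by
  set T := (C ×ˢ D).filter (fun z => ∀ k, z.1 k (f k) = z.2 (e k).1 (e k).2) with hT
  have hmem : ∀ z ∈ T, z.1 ∈ C ∧ z.2 ∈ D ∧ ∀ k, z.1 k (f k) = z.2 (e k).1 (e k).2 := by
    intro z hz
    rw [hT, Finset.mem_filter, Finset.mem_product] at hz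
    exact ⟨hz.1.1, hz.1.2, hz.2⟩
  have hPdet : ∀ z ∈ T, ∀ z' ∈ T, z.1 = z'.1 → z = z' := by
    intro z hz z' hz' h1
    obtain ⟨_, _, hc⟩ := hmem z hz
    obtain ⟨_, _, hc'⟩ := hmem z' hz'
    have h2 : z.2 = z'.2 := by
      funext b c
      have hcc := hc (e.symm (b, c))
      have hcc' := hc' (e.symm (b, c))
      rw [e.apply_symm_apply] at hcc hcc'
      rw [← hcc, ← hcc', h1]
    exact Prod.ext h1 h2
  have hkey : ∀ z ∈ T, ∀ z' ∈ T,
      arrDist (Phi e f z.1) (Phi e f z'.1) + arrDist z.2 z'.2 = arrDist z.1 z'.1 := by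
    intro z hz z' hz'
    obtain ⟨_, _, hc⟩ := hmem z hz
    obtain ⟨_, _, hc'⟩ := hmem z' hz'
    have h1 : arrDist (Phi e f z.1) (Phi e f z'.1)
        = ∑ k, hammingDist (z.1 k ∘ (f k).succAbove) (z'.1 k ∘ (f k).succAbove) := by
      exact (Finset.sum_congr rfl fun b _ => Phi_dist e f z.1 z'.1 b).trans
        (sum_blocks e (fun k => hammingDist (z.1 k ∘ (f k).succAbove)
          (z'.1 k ∘ (f k).succAbove)))
    have h2 : arrDist z.2 z'.2 = ∑ k,
        if z.1 k (f k) ≠ z'.1 k (f k) then 1 else 0 := by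
      refine ((Finset.sum_congr rfl fun b _ => dist_eq_sum (z.2 b) (z'.2 b)).trans ?_).trans
        (sum_blocks e (fun k => if z.1 k (f k) ≠ z'.1 k (f k) then 1 else 0))
      refine Finset.sum_congr rfl fun b _ => Finset.sum_congr rfl fun c _ => ?_
      rw [hc (e.symm (b,c)), hc' (e.symm (b,c)), e.apply_symm_apply]
    have h3 : arrDist z.1 z'.1 = ∑ k,
        ((if z.1 k (f k) ≠ z'.1 k (f k) then 1 else 0)
          + hammingDist (z.1 k ∘ (f k).succAbove) (z'.1 k ∘ (f k).succAbove)) :=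
      Finset.sum_congr rfl fun k _ => dist_succAbove (f k) (z.1 k) (z'.1 k)
    rw [h1, h2, h3, Finset.sum_add_distrib, add_comm]
  have hXeq : ∀ z ∈ T, ∀ z' ∈ T, Phi e f z.1 = Phi e f z'.1 → z.1 = z'.1 := by
    intro z hz z' hz' hPhi
    obtain ⟨hzC, _, _⟩ := hmem z hz
    obtain ⟨hz'C, _, _⟩ := hmem z' hz'
    funext k
    have hred : z.1 k ∘ (f k).succAbove = z'.1 k ∘ (f k).succAbove := by
      funext r
      have h0 := congrFun (congrFun hPhi (e k).1) (finProdFinEquiv (r, (e k).2))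
      simpa [Phi, Prod.mk.eta, Equiv.symm_apply_apply, Function.comp] using h0
    have hw1 := hCw z.1 hzC k
    have hw2 := hCw z'.1 hz'C k
    rw [norm_succAbove (f k)] at hw1 hw2
    rw [hred] at hw1
    have hjeq : z.1 k (f k) = z'.1 k (f k) := zmod2_ind (by omega)
    funext i
    rcases eq_or_ne i (f k) with rfl | hij
    · exact hjeq
    · obtain ⟨r, hr⟩ := Fin.exists_succAbove_eq hij
      rw [← hr]
      exact congrFun hred r
  have hinj : Set.InjOn (fun z : (Fin (l*t) → Fin (M+1) → ZMod 2) × (Fin t → Fin l → ZMod 2) =>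
      Phi e f z.1) T := by
    intro z hz z' hz' hPhi
    exact hPdet z hz z' hz' (hXeq z hz z' hz' hPhi)
  have hnorm : ∀ z ∈ T, ∀ b, hammingNorm (Phi e f z.1 b) = l*w - v := by
    intro z hz b
    obtain ⟨hzC, hzD, hc⟩ := hmem z hz
    rw [Phi_norm]
    have h1 : ∀ c, hammingNorm (z.1 (e.symm (b,c)))
        = (if z.2 b c ≠ 0 then 1 else 0)
          + hammingNorm (z.1 (e.symm (b,c)) ∘ (f (e.symm (b,c))).succAbove) := by
      intro c
      have hcc := hc (e.symm (b,c))
      rw [e.apply_symm_apply] at hcc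
      rw [norm_succAbove (f (e.symm (b,c))), hcc]
    have h2 : ∑ c, hammingNorm (z.1 (e.symm (b,c))) = l * w := by
      rw [Finset.sum_congr rfl fun c _ => hCw z.1 hzC (e.symm (b,c))]
      simp [mul_comm]
    have h3 : ∑ c, (if z.2 b c ≠ 0 then (1:ℕ) else 0) = v := by
      rw [← norm_eq_sum]; exact hDw z.2 hzD b
    rw [Finset.sum_congr rfl fun c _ => h1 c, Finset.sum_add_distrib, h3] at h2
    omega
  rcases Finset.eq_empty_or_nonempty T with h | h
  · simp [h]
  · rw [← Finset.card_image_of_injOn hinj]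
    apply card_le_amax
    refine ⟨h.image _, ?_, ?_⟩
    · rintro Y hY k
      rw [Finset.mem_image] at hY
      obtain ⟨z, hz, rfl⟩ := hY
      exact hnorm z hz k
    · rintro Y hY Y' hY' hne
      rw [Finset.mem_image] at hY hY'
      obtain ⟨z, hz, rfl⟩ := hY
      obtain ⟨z', hz', rfl⟩ := hY'
      have hX : z.1 ≠ z'.1 := fun h1 => hne (by rw [h1])
      have hd := hCd z.1 (hmem z hz).1 z'.1 (hmem z' hz').1 hX
      have hdelta := hDdiam z.2 (hmem z hz).2.1 z'.2 (hmem z' hz').2.1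
      have hk := hkey z hz z' hz'
      omega

theorem johnson_bound_CWAC (m n w d l v δ : ℕ)
    (hw : 1 ≤ w) (hwm : w < m) (hl : l ∣ n) (hv1 : 1 ≤ v) (hvl : v ≤ l)
    (hvlw : v ≤ l * w) (hδd : δ ≤ d) (hδ : δ ≤ (n / l) * min v (l - v)) :
    alphaMax l (n / l) v δ * w ^ (n * v / l) * (m - w) ^ (n - n * v / l) * Amax m n w d
      ≤ m ^ n * Amax ((m - 1) * l) (n / l) (l * w - v) (d - δ) := by
  have hl1 : 1 ≤ l := le_trans hv1 hvl
  obtain ⟨t, rfl⟩ := hl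
  obtain ⟨M, rfl⟩ : ∃ M, m = M + 1 := ⟨m - 1, by omega⟩
  have hd1 : l * t / l = t := Nat.mul_div_cancel_left t (by omega)
  have hd2 : l * t * v / l = t * v := by
    rw [mul_assoc]; exact Nat.mul_div_cancel_left _ (by omega)
  rw [hd1, hd2]
  simp only [Nat.add_sub_cancel]
  obtain ⟨C, ⟨hCne, hCw, hCd⟩, hCcard⟩ := amax_spec (M+1) (l*t) w d (by omega)
  obtain ⟨D, hDne, hDw, hDdiam, hDcard⟩ := alpha_spec l t v δ hvl
  rw [← hCcard, ← hDcard]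
  set e : Fin (l*t) ≃ Fin t × Fin l :=
    (finCongr (mul_comm l t)).trans finProdFinEquiv.symm with he
  have hconst : ∀ z ∈ C ×ˢ D,
      ((univ : Finset (Fin (l*t) → Fin (M+1))).filter
        (fun f => ∀ k, z.1 k (f k) = z.2 (e k).1 (e k).2)).card
      = w ^ (t*v) * ((M+1) - w) ^ (l*t - t*v) := by
    intro z hz
    rw [Finset.mem_product] at hz
    exact count_f e z.1 (hCw z.1 hz.1) z.2 (hDw z.2 hz.2)
  have hstep1 : D.card * w ^ (t*v) * ((M+1) - w) ^ (l*t - t*v) * C.card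
      = ∑ z ∈ C ×ˢ D, ((univ : Finset (Fin (l*t) → Fin (M+1))).filter
          (fun f => ∀ k, z.1 k (f k) = z.2 (e k).1 (e k).2)).card := by
    rw [Finset.sum_congr rfl hconst, Finset.sum_const, Finset.card_product, smul_eq_mul]
    ring
  have hswap : ∑ z ∈ C ×ˢ D, ((univ : Finset (Fin (l*t) → Fin (M+1))).filter
          (fun f => ∀ k, z.1 k (f k) = z.2 (e k).1 (e k).2)).card
      = ∑ f : Fin (l*t) → Fin (M+1),
          ((C ×ˢ D).filter (fun z => ∀ k, z.1 k (f k) = z.2 (e k).1 (e k).2)).card := by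
    simp only [Finset.card_filter]
    exact Finset.sum_comm
  have hbound : ∑ f : Fin (l*t) → Fin (M+1),
        ((C ×ˢ D).filter (fun z => ∀ k, z.1 k (f k) = z.2 (e k).1 (e k).2)).card
      ≤ (M+1) ^ (l*t) * Amax (M*l) t (l*w - v) (d - δ) := by
    calc ∑ f : Fin (l*t) → Fin (M+1),
          ((C ×ˢ D).filter (fun z => ∀ k, z.1 k (f k) = z.2 (e k).1 (e k).2)).card
        ≤ ∑ _f : Fin (l*t) → Fin (M+1), Amax (M*l) t (l*w - v) (d - δ) :=
          Finset.sum_le_sum fun f _ => fiber_bound e C hCw hCd D hDw hDdiam f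
      _ = (M+1) ^ (l*t) * Amax (M*l) t (l*w - v) (d - δ) := by
          rw [Finset.sum_const, smul_eq_mul, Finset.card_univ, Fintype.card_fun,
            Fintype.card_fin, Fintype.card_fin]
  calc D.card * w ^ (t*v) * ((M+1) - w) ^ (l*t - t*v) * C.card
      = ∑ f : Fin (l*t) → Fin (M+1),
          ((C ×ˢ D).filter (fun z => ∀ k, z.1 k (f k) = z.2 (e k).1 (e k).2)).card :=
        hstep1.trans hswap
    _ ≤ (M+1) ^ (l*t) * Amax (M*l) t (l*w - v) (d - δ) := hbound
end

section
/- Let m, n, w, d, l, v be natural numbers with 1 ≤ w < m, l ∣ n, 1 ≤ v ≤ l, and v ≤ l·w. Then w^(n·v/l) · (m−w)^(n − n·v/l) · A(m, n, w, d) ≤ m^n · A((m−1)·l, n/l, l·w − v, d). -/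
/-!
Write `n = n' * l` and cut the rows into `n'` blocks of `l` rows; let `σ` (`blockPattern`) be
`1` on the first `v` rows of every block and `0` elsewhere. Call a choice `J` of one column per row admissible for a word `X` when
`X r (J r) = σ r` for every row `r`. A word of constant row weight `w` admits exactly
`w ^ (n' v) * (m - w) ^ (n' (l - v))` such `J`. Conversely, for a fixed `J`, deleting column
`J r` from each row `r` and concatenating the rows of each block maps the codewords admitting
`J` injectively and isometrically into `J((m-1) l, l w - v)^n'`, so at most
`A((m-1) l, n', l w - v, d)` codewords admit `J`. Counting admissible pairs both ways over the
`m ^ n` choices of `J` gives the bound.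
-/

open Finset

section Hamming

variable {β : Type*} [DecidableEq β] {M : ℕ}

theorem hammingDist_comp_succAbove {x y : Fin (M + 1) → β} {j : Fin (M + 1)} (h : x j = y j) :
    hammingDist (x ∘ j.succAbove) (y ∘ j.succAbove) = hammingDist x y := by
  simp only [hammingDist, card_filter, Fin.sum_univ_succAbove _ j, h, Function.comp_apply]
  simp

theorem hammingNorm_comp_succAbove_add [Zero β] (x : Fin (M + 1) → β) (j : Fin (M + 1)) :
    hammingNorm (x ∘ j.succAbove) + (if x j = 0 then 0 else 1) = hammingNorm x := by
  simp only [hammingNorm, card_filter, Fin.sum_univ_succAbove _ j, Function.comp_apply]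
  split_ifs <;> simp_all [add_comm]

theorem card_filter_eq_one_eq_hammingNorm {ι : Type*} [Fintype ι] (x : ι → ZMod 2) :
    #{i | x i = 1} = hammingNorm x :=
  congrArg card <| filter_congr fun i _ => (by decide : ∀ a : ZMod 2, a = 1 ↔ a ≠ 0) (x i)

theorem card_filter_eq_zero_eq_card_sub_hammingNorm {ι : Type*} [Fintype ι] (x : ι → ZMod 2) :
    #{i | x i = 0} = Fintype.card ι - hammingNorm x := by
  rw [hammingNorm, ← card_univ,
    ← card_filter_add_card_filter_not (s := univ) fun i => x i = 0]
  simp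

end Hamming

theorem Fin.prod_ite_val_lt {α : Type*} [CommMonoid α] {l v : ℕ} (hvl : v ≤ l) (a b : α) :
    ∏ k : Fin l, (if (k : ℕ) < v then a else b) = a ^ v * b ^ (l - v) := by
  rw [Fin.prod_univ_eq_prod_range (fun k => if k < v then a else b),
    ← prod_range_mul_prod_Ico _ hvl,
    prod_congr rfl fun k hk => if_pos (mem_range.1 hk),
    prod_congr rfl fun k hk => if_neg (not_lt.2 (mem_Ico.1 hk).1)]
  simp

theorem Fin.sum_ite_val_lt {l v : ℕ} (hvl : v ≤ l) :
    ∑ k : Fin l, (if (k : ℕ) < v then 1 else 0) = v := by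
  rw [← card_filter, Fin.card_filter_val_lt, min_eq_right hvl]

section Amax

variable {m n w d : ℕ}

theorem bddAbove_card_isCWAC :
    BddAbove {c | ∃ C : Finset (Fin n → Fin m → ZMod 2), isCWAC m n w d C ∧ #C = c} :=
  ⟨Fintype.card (Fin n → Fin m → ZMod 2), by rintro _ ⟨C, -, rfl⟩; exact card_le_univ C⟩

theorem card_le_Amax {C : Finset (Fin n → Fin m → ZMod 2)} (hC : isCWAC m n w d C) :
    #C ≤ Amax m n w d :=
  le_csSup bddAbove_card_isCWAC ⟨C, hC, rfl⟩

theorem exists_isCWAC_card_eq_Amax (h : Amax m n w d ≠ 0) :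
    ∃ C : Finset (Fin n → Fin m → ZMod 2), isCWAC m n w d C ∧ #C = Amax m n w d := by
  refine Nat.sSup_mem (Set.nonempty_iff_ne_empty.2 fun he => h ?_) bddAbove_card_isCWAC
  rw [Amax, he, csSup_empty]
  rfl

end Amax

section ArrayOperations

variable {β : Type*} {N M n' l : ℕ}

def puncture (X : Fin N → Fin (M + 1) → β) (J : Fin N → Fin (M + 1)) :
    Fin N → Fin M → β :=
  fun r => X r ∘ (J r).succAbove

theorem eq_of_puncture_eq {X Y : Fin N → Fin (M + 1) → β} {J : Fin N → Fin (M + 1)}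
    (hJ : ∀ r, X r (J r) = Y r (J r)) (h : puncture X J = puncture Y J) : X = Y := by
  funext r j
  rcases Fin.eq_self_or_eq_succAbove (J r) j with rfl | ⟨t, rfl⟩
  · exact hJ r
  · exact congrFun (congrFun h r) t

theorem arrDist_puncture {X Y : Fin N → Fin (M + 1) → ZMod 2} {J : Fin N → Fin (M + 1)}
    (hJ : ∀ r, X r (J r) = Y r (J r)) : arrDist (puncture X J) (puncture Y J) = arrDist X Y :=
  sum_congr rfl fun r _ => hammingDist_comp_succAbove (hJ r)

def mergeBlocks (Y : Fin (n' * l) → Fin M → β) : Fin n' → Fin (M * l) → β :=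
  fun b c => Y (finProdFinEquiv (b, (finProdFinEquiv.symm c).2)) (finProdFinEquiv.symm c).1

theorem mergeBlocks_injective :
    Function.Injective (mergeBlocks : (Fin (n' * l) → Fin M → β) → _) := by
  intro Y Y' h
  funext r t
  obtain ⟨⟨b, k⟩, rfl⟩ := finProdFinEquiv.surjective r
  simpa [mergeBlocks] using congrFun (congrFun h b) (finProdFinEquiv (t, k))

theorem hammingDist_mergeBlocks [DecidableEq β] (Y Y' : Fin (n' * l) → Fin M → β)
    (b : Fin n') :
    hammingDist (mergeBlocks Y b) (mergeBlocks Y' b)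
      = ∑ k, hammingDist (Y (finProdFinEquiv (b, k))) (Y' (finProdFinEquiv (b, k))) := by
  simp only [hammingDist, card_filter]
  rw [← finProdFinEquiv.sum_comp, Fintype.sum_prod_type, sum_comm]
  simp [mergeBlocks]

theorem hammingNorm_mergeBlocks [DecidableEq β] [Zero β] (Y : Fin (n' * l) → Fin M → β)
    (b : Fin n') :
    hammingNorm (mergeBlocks Y b) = ∑ k, hammingNorm (Y (finProdFinEquiv (b, k))) := by
  have h0 : mergeBlocks (0 : Fin (n' * l) → Fin M → β) b = 0 := rfl
  simpa only [h0, Pi.zero_apply, hammingDist_zero_right] using hammingDist_mergeBlocks Y 0 b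

theorem arrDist_mergeBlocks (Y Y' : Fin (n' * l) → Fin M → ZMod 2) :
    arrDist (mergeBlocks Y) (mergeBlocks Y') = arrDist Y Y' := by
  simp only [arrDist, hammingDist_mergeBlocks]
  rw [← Fintype.sum_prod_type']
  exact finProdFinEquiv.sum_comp fun r => hammingDist (Y r) (Y' r)

end ArrayOperations

theorem sum_card_filter_forall_eq_sum_prod {N : ℕ} {γ β : Type*} [Fintype γ] [DecidableEq γ]
    [DecidableEq β] (C : Finset (Fin N → γ → β)) (σ : Fin N → β) :
    ∑ J : Fin N → γ, #{X ∈ C | ∀ r, X r (J r) = σ r}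
      = ∑ X ∈ C, ∏ r, #{j | X r j = σ r} := by
  calc ∑ J : Fin N → γ, #{X ∈ C | ∀ r, X r (J r) = σ r}
      = ∑ X ∈ C, #{J : Fin N → γ | ∀ r, X r (J r) = σ r} := by
        simp only [card_filter]
        exact sum_comm
    _ = ∑ X ∈ C, ∏ r, #{j | X r j = σ r} := sum_congr rfl fun X _ => by
        rw [← Fintype.card_piFinset]
        congr 1
        ext J
        simp [Fintype.mem_piFinset]

def blockPattern (n' l v : ℕ) (r : Fin (n' * l)) : ZMod 2 :=
  if ((finProdFinEquiv.symm r).2 : ℕ) < v then 1 else 0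

section BlockPattern

variable {M n' l v w d : ℕ}

theorem prod_card_filter_eq_blockPattern (hvl : v ≤ l) {m : ℕ}
    {X : Fin (n' * l) → Fin m → ZMod 2} (hX : ∀ r, hammingNorm (X r) = w) :
    ∏ r, #{j | X r j = blockPattern n' l v r}
      = w ^ (n' * v) * (m - w) ^ (n' * l - n' * v) := by
  have hrow : ∀ r, #{j | X r j = blockPattern n' l v r}
      = if ((finProdFinEquiv.symm r).2 : ℕ) < v then w else m - w := by
    intro r
    unfold blockPattern
    split_ifs
    · rw [card_filter_eq_one_eq_hammingNorm, hX]
    · rw [card_filter_eq_zero_eq_card_sub_hammingNorm, hX, Fintype.card_fin]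
  rw [prod_congr rfl fun r _ => hrow r, ← finProdFinEquiv.prod_comp, Fintype.prod_prod_type]
  simp only [Equiv.symm_apply_apply]
  rw [prod_congr rfl fun _ _ => Fin.prod_ite_val_lt hvl w (m - w), prod_const, card_univ,
    Fintype.card_fin, mul_pow, ← pow_mul, ← pow_mul, ← Nat.mul_sub, mul_comm v,
    mul_comm (l - v)]

theorem hammingNorm_mergeBlocks_puncture (hvl : v ≤ l)
    {X : Fin (n' * l) → Fin (M + 1) → ZMod 2} {J : Fin (n' * l) → Fin (M + 1)}
    (hX : ∀ r, hammingNorm (X r) = w)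
    (hXJ : ∀ r, X r (J r) = blockPattern n' l v r) (b : Fin n') :
    hammingNorm (mergeBlocks (puncture X J) b) = l * w - v := by
  have hrow : ∀ k : Fin l, hammingNorm (puncture X J (finProdFinEquiv (b, k)))
      + (if (k : ℕ) < v then 1 else 0) = w := by
    intro k
    have := hammingNorm_comp_succAbove_add (X (finProdFinEquiv (b, k)))
      (J (finProdFinEquiv (b, k)))
    rw [hXJ, hX, blockPattern, Equiv.symm_apply_apply] at this
    by_cases hk : (k : ℕ) < v <;> simpa [hk, puncture] using this
  have hsum := Finset.sum_congr rfl fun k (_ : k ∈ univ) => hrow k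
  rw [sum_add_distrib, Fin.sum_ite_val_lt hvl, sum_const, card_univ, Fintype.card_fin,
    smul_eq_mul] at hsum
  rw [hammingNorm_mergeBlocks]
  omega

theorem card_filter_blockPattern_le_Amax (hvl : v ≤ l)
    {C : Finset (Fin (n' * l) → Fin (M + 1) → ZMod 2)} (hC : isCWAC (M + 1) (n' * l) w d C)
    (J : Fin (n' * l) → Fin (M + 1)) :
    #{X ∈ C | ∀ r, X r (J r) = blockPattern n' l v r} ≤ Amax (M * l) n' (l * w - v) d := by
  set F := {X ∈ C | ∀ r, X r (J r) = blockPattern n' l v r}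
  have hF : ∀ X ∈ F, X ∈ C ∧ ∀ r, X r (J r) = blockPattern n' l v r :=
    fun X => mem_filter.1
  have hJ : ∀ X ∈ F, ∀ Y ∈ F, ∀ r, X r (J r) = Y r (J r) := fun X hX Y hY r => by
    rw [(hF X hX).2, (hF Y hY).2]
  rcases F.eq_empty_or_nonempty with hempty | hne
  · simp [hempty]
  have hinj : Set.InjOn (fun X => mergeBlocks (puncture X J)) F := fun X hX Y hY h =>
    eq_of_puncture_eq (hJ X hX Y hY) (mergeBlocks_injective h)
  rw [← card_image_of_injOn hinj]
  refine card_le_Amax ⟨hne.image _, ?_, ?_⟩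
  · simp only [mem_image]
    rintro _ ⟨X, hX, rfl⟩
    exact hammingNorm_mergeBlocks_puncture hvl (hC.2.1 X (hF X hX).1) (hF X hX).2
  · simp only [mem_image]
    rintro _ ⟨X, hX, rfl⟩ _ ⟨Y, hY, rfl⟩ hXY
    rw [arrDist_mergeBlocks, arrDist_puncture (hJ X hX Y hY)]
    exact hC.2.2 X (hF X hX).1 Y (hF Y hY).1 fun h => hXY (h ▸ rfl)

theorem pow_mul_pow_mul_card_le (hvl : v ≤ l)
    {C : Finset (Fin (n' * l) → Fin (M + 1) → ZMod 2)} (hC : isCWAC (M + 1) (n' * l) w d C) :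
    w ^ (n' * v) * (M + 1 - w) ^ (n' * l - n' * v) * #C
      ≤ (M + 1) ^ (n' * l) * Amax (M * l) n' (l * w - v) d :=
  calc w ^ (n' * v) * (M + 1 - w) ^ (n' * l - n' * v) * #C
      = ∑ X ∈ C, ∏ r, #{j | X r j = blockPattern n' l v r} := by
        rw [sum_congr rfl fun X hX => prod_card_filter_eq_blockPattern hvl (hC.2.1 X hX),
          sum_const, smul_eq_mul, mul_comm]
    _ = ∑ J, #{X ∈ C | ∀ r, X r (J r) = blockPattern n' l v r} :=
        (sum_card_filter_forall_eq_sum_prod C _).symm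
    _ ≤ ∑ _J : Fin (n' * l) → Fin (M + 1), Amax (M * l) n' (l * w - v) d :=
        sum_le_sum fun J _ => card_filter_blockPattern_le_Amax hvl hC J
    _ = (M + 1) ^ (n' * l) * Amax (M * l) n' (l * w - v) d := by
        rw [sum_const, card_univ, Fintype.card_fun, Fintype.card_fin, Fintype.card_fin,
          smul_eq_mul]

end BlockPattern

theorem johnson_bound_CWAC_delta_zero_general (m n w d l v : ℕ)
    (hwm : w < m) (hl : l ∣ n) (hvl : v ≤ l) :
    w ^ (n * v / l) * (m - w) ^ (n - n * v / l) * Amax m n w d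
      ≤ m ^ n * Amax ((m - 1) * l) (n / l) (l * w - v) d := by
  obtain ⟨M, rfl⟩ : ∃ M, m = M + 1 := ⟨m - 1, by omega⟩
  rw [mul_comm n v, Nat.mul_div_assoc v hl, mul_comm v]
  generalize hn' : n / l = n'
  obtain rfl : n = n' * l := by rw [← hn', Nat.div_mul_cancel hl]
  rw [Nat.add_sub_cancel]
  rcases eq_or_ne (Amax (M + 1) (n' * l) w d) 0 with h0 | h0
  · simp [h0]
  obtain ⟨C, hC, hcard⟩ := exists_isCWAC_card_eq_Amax h0
  rw [← hcard]
  exact pow_mul_pow_mul_card_le hvl hC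

theorem johnson_bound_CWAC_delta_zero (m n w d l v : ℕ)
    (hw : 1 ≤ w) (hwm : w < m) (hl : l ∣ n) (hv1 : 1 ≤ v) (hvl : v ≤ l)
    (hvlw : v ≤ l * w) :
    w ^ (n * v / l) * (m - w) ^ (n - n * v / l) * Amax m n w d
      ≤ m ^ n * Amax ((m - 1) * l) (n / l) (l * w - v) d :=
  johnson_bound_CWAC_delta_zero_general m n w d l v hwm hl hvl
end

section
/- Fix natural numbers m, n, w, u with w ≤ m and u ≤ m, and fix a word X ∈ J(m,w)^n. Define ν : ℕ → ℕ by ν(i) = (Nat.choose w ((u+w−i)/2)) · (Nat.choose (m−w) ((u−w+i)/2)) when u+w−i is even, u+w−i ≥ 0 and u−w+i ≥ 0, and ν(i) = 0 otherwise (binomial coefficients being 0 when the lower index exceeds the upper). Then for every d, the number of words Y ∈ J(m,u)^n with Hamming distance from X exactly d equals the sum, over all n-tuples (d_0, …, d_{n−1}) of natural numbers with d_0 + ⋯ + d_{n−1} = d, of the product ν(d_0)·ν(d_1)·⋯·ν(d_{n−1}). -/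
open Finset

lemma z1 (a b : ZMod 2) : (a + if b ≠ a then 1 else 0) = b := by
  revert a b; decide

lemma z2 (a : ZMod 2) (c : Prop) [Decidable c] : ((a + if c then 1 else 0) ≠ a ↔ c) := by
  split <;> simp_all

lemma card_symmDiff_aux {α : Type*} [DecidableEq α] (T D : Finset α) :
    (symmDiff T D).card + 2 * (T ∩ D).card = T.card + D.card := by
  have h1 : symmDiff T D = (T ∪ D) \ (T ∩ D) := by
    ext j; simp [Finset.mem_symmDiff]; tauto
  rw [h1, card_sdiff_of_subset (Finset.inter_subset_union)]
  have := Finset.card_union_add_card_inter T D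
  have h2 : (T ∩ D).card ≤ (T ∪ D).card := card_le_card (Finset.inter_subset_union)
  omega


lemma count_D (m w u i : ℕ) (T : Finset (Fin m)) (hT : T.card = w) :
    (univ.filter fun D : Finset (Fin m) =>
      D.card = i ∧ (symmDiff T D).card = u).card = nuF m w u i := by
  have key : ∀ D : Finset (Fin m), (symmDiff T D).card + 2 * (T ∩ D).card = w + D.card := by
    intro D; rw [← hT]; exact card_symmDiff_aux T D
  have hempty : ¬((u + w - i) % 2 = 0 ∧ i ≤ u + w ∧ w ≤ u + i ∧ u ≤ w + i) →
      (univ.filter fun D : Finset (Fin m) =>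
        D.card = i ∧ (symmDiff T D).card = u).card = 0 := by
    intro hcond
    rw [Finset.card_eq_zero, Finset.filter_eq_empty_iff]
    intro D _
    rintro ⟨hDi, hDu⟩
    have hc := key D
    have h1 : (T ∩ D).card ≤ w := hT ▸ card_le_card inter_subset_left
    have h2 : (T ∩ D).card ≤ D.card := card_le_card inter_subset_right
    omega
  by_cases hcond : (u + w - i) % 2 = 0 ∧ i ≤ u + w ∧ w ≤ u + i ∧ u ≤ w + i
  · obtain ⟨hpar, h1, h2, h3⟩ := hcond
    have ha : 2 * ((w + i - u) / 2) = w + i - u := by omega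
    have hb : 2 * ((u + i - w) / 2) = u + i - w := by omega
    set a := (w + i - u) / 2 with hadef
    set b := (u + i - w) / 2 with hbdef
    rw [nuF, if_pos ⟨hpar, h1, h2⟩]
    have hbij : (univ.filter fun D : Finset (Fin m) =>
        D.card = i ∧ (symmDiff T D).card = u).card
        = ((powersetCard a T) ×ˢ (powersetCard b Tᶜ)).card := by
      apply Finset.card_nbij' (fun D => (D ∩ T, D \ T)) (fun p => p.1 ∪ p.2)
      · intro D hD
        simp only [mem_coe, mem_filter, mem_univ, true_and] at hD
        have hc := key D
        have hw1 : (T ∩ D).card ≤ w := hT ▸ card_le_card inter_subset_left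
        have hw2 : (D \ T).card + (D ∩ T).card = D.card :=
          Finset.card_sdiff_add_card_inter D T
        rw [Finset.inter_comm] at hc
        simp only [mem_coe, mem_product, mem_powersetCard]
        refine ⟨⟨inter_subset_right, by omega⟩, fun j hj => ?_, by omega⟩
        simp only [mem_sdiff] at hj
        simpa using hj.2
      · rintro ⟨A, B⟩ hAB
        simp only [mem_coe, mem_product, mem_powersetCard] at hAB
        obtain ⟨⟨hAT, hA⟩, hBT, hB⟩ := hAB
        have hdisj : Disjoint A B := by
          refine Finset.disjoint_left.mpr fun j hjA hjB => ?_
          have := hBT hjB; simp at this; exact this (hAT hjA)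
        have hcard : (A ∪ B).card = a + b := by
          rw [Finset.card_union_of_disjoint hdisj, hA, hB]
        have h5 : ∀ j ∈ B, j ∉ T := fun j h => by have := hBT h; simpa using this
        have hsd : symmDiff T (A ∪ B) = (T \ A) ∪ B := by
          ext j
          simp only [Finset.mem_symmDiff, mem_union, mem_sdiff]
          have h4 : j ∈ A → j ∈ T := fun h => hAT h
          have h6 := h5 j
          tauto
        have hsdcard : ((T \ A) ∪ B).card = (w - a) + b := by
          rw [Finset.card_union_of_disjoint, Finset.card_sdiff_of_subset hAT, hT, hA, hB]
          refine Finset.disjoint_left.mpr fun j hj hjB => h5 j hjB ((Finset.mem_sdiff.mp hj).1)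
        simp only [mem_coe, mem_filter, mem_univ, true_and]
        constructor
        · omega
        · rw [hsd, hsdcard]; omega
      · intro D hD
        simp only
        ext j; simp only [mem_union, mem_inter, mem_sdiff]; tauto
      · rintro ⟨A, B⟩ hAB
        simp only [mem_coe, mem_product, mem_powersetCard] at hAB
        obtain ⟨⟨hAT, hA⟩, hBT, hB⟩ := hAB
        have h5 : ∀ j ∈ B, j ∉ T := fun j h => by have := hBT h; simpa using this
        have e1 : (A ∪ B) ∩ T = A := by
          ext j; simp only [mem_inter, mem_union]
          have h4 : j ∈ A → j ∈ T := fun h => hAT h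
          have h6 := h5 j
          tauto
        have e2 : (A ∪ B) \ T = B := by
          ext j; simp only [mem_sdiff, mem_union]
          have h4 : j ∈ A → j ∈ T := fun h => hAT h
          have h6 := h5 j
          tauto
        simp [e1, e2]
    rw [hbij, Finset.card_product, Finset.card_powersetCard, Finset.card_powersetCard,
      Finset.card_compl]
    simp only [Fintype.card_fin]
    rw [hT]
    have h7 : (u + w - i) / 2 = w - a := by omega
    rw [h7, Nat.choose_symm (by omega : a ≤ w)]
  · rw [hempty hcond]
    by_cases hcond2 : (u + w - i) % 2 = 0 ∧ i ≤ u + w ∧ w ≤ u + i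
    · -- then u > w + i, so choose w ((u+w-i)/2) = 0
      rw [nuF, if_pos hcond2]
      have : w < (u + w - i) / 2 := by omega
      rw [Nat.choose_eq_zero_of_lt this, zero_mul]
    · rw [nuF, if_neg hcond2]

lemma zmod_xor (a b : ZMod 2) : ((a ≠ 0 ∧ ¬b ≠ a) ∨ (b ≠ a ∧ ¬a ≠ 0)) ↔ b ≠ 0 := by
  revert a b; decide

lemma zmod_add_one (a : ZMod 2) : a + 1 ≠ 0 ↔ ¬a ≠ 0 := by revert a; decide

lemma zmod_add_zero (a : ZMod 2) : a + 0 ≠ 0 ↔ a ≠ 0 := by revert a; decide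

lemma count_single (m w u i : ℕ) (x : Fin m → ZMod 2) (hx : hammingNorm x = w) :
    (univ.filter fun y : Fin m → ZMod 2 =>
      hammingNorm y = u ∧ hammingDist x y = i).card = nuF m w u i := by
  classical
  set T : Finset (Fin m) := univ.filter fun j => x j ≠ 0 with hTdef
  have hT : T.card = w := hx
  rw [← count_D m w u i T hT]
  apply Finset.card_nbij' (fun y => univ.filter fun j => y j ≠ x j)
    (fun D => fun j => x j + if j ∈ D then 1 else 0)
  · intro y hy
    simp only [mem_coe, mem_filter, mem_univ, true_and] at hy ⊢
    obtain ⟨hyu, hyi⟩ := hy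
    have hsd : symmDiff T (univ.filter fun j => y j ≠ x j)
        = univ.filter fun j => y j ≠ 0 := by
      ext j
      simp only [Finset.mem_symmDiff, mem_filter, mem_univ, true_and, hTdef]
      exact zmod_xor (x j) (y j)
    constructor
    · rw [← hyi]; unfold hammingDist
      congr 1; ext j; simp [ne_comm]
    · rw [hsd, ← hyu]; rfl
  · intro D hD
    simp only [mem_coe, mem_filter, mem_univ, true_and] at hD ⊢
    obtain ⟨hDi, hDu⟩ := hD
    have hsd : (univ.filter fun j => x j + (if j ∈ D then 1 else 0) ≠ 0)
        = symmDiff T D := by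
      ext j
      simp only [Finset.mem_symmDiff, mem_filter, mem_univ, true_and, hTdef]
      by_cases hj : j ∈ D
      · simp only [hj, if_true, iff_true, zmod_add_one (x j)]; tauto
      · simp only [hj, if_false, zmod_add_zero (x j)]; tauto
    constructor
    · show (univ.filter fun j => x j + (if j ∈ D then 1 else 0) ≠ 0).card = u
      rw [hsd, hDu]
    · show (univ.filter fun j => x j ≠ x j + (if j ∈ D then 1 else 0)).card = i
      rw [← hDi]
      congr 1; ext j
      simp only [mem_filter, mem_univ, true_and]
      rw [ne_comm]
      exact z2 (x j) (j ∈ D)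
  · intro y hy
    funext j
    simp only [mem_filter, mem_univ, true_and]
    exact z1 (x j) (y j)
  · intro D hD
    ext j
    simp only [mem_filter, mem_univ, true_and]
    exact z2 (x j) (j ∈ D)


theorem count_words_at_distance (m n w u : ℕ) (hw : w ≤ m) (hu : u ≤ m)
    (X : Fin n → Fin m → ZMod 2) (hX : ∀ k, hammingNorm (X k) = w) (d : ℕ) :
    (Finset.univ.filter (fun Y : Fin n → Fin m → ZMod 2 =>
        (∀ k, hammingNorm (Y k) = u) ∧ arrDist X Y = d)).card
      = ∑ π ∈ Finset.Nat.antidiagonalTuple n d, ∏ i, nuF m w u (π i) := by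
  classical
  have hdecomp : (Finset.univ.filter (fun Y : Fin n → Fin m → ZMod 2 =>
        (∀ k, hammingNorm (Y k) = u) ∧ arrDist X Y = d))
      = (Finset.Nat.antidiagonalTuple n d).biUnion (fun π =>
          Fintype.piFinset fun k => univ.filter fun y : Fin m → ZMod 2 =>
            hammingNorm y = u ∧ hammingDist (X k) y = π k) := by
    ext Y
    simp only [mem_filter, mem_univ, true_and, mem_biUnion, Fintype.mem_piFinset,
      Finset.Nat.mem_antidiagonalTuple]
    constructor
    · rintro ⟨hYu, hYd⟩
      exact ⟨fun k => hammingDist (X k) (Y k), hYd, fun k => ⟨hYu k, rfl⟩⟩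
    · rintro ⟨π, hπ, hY⟩
      refine ⟨fun k => (hY k).1, ?_⟩
      rw [arrDist]
      rw [← hπ]
      exact Finset.sum_congr rfl fun k _ => (hY k).2
  rw [hdecomp, Finset.card_biUnion]
  · refine Finset.sum_congr rfl fun π _ => ?_
    rw [Fintype.card_piFinset]
    exact Finset.prod_congr rfl fun k _ => count_single m w u (π k) (X k) (hX k)
  · intro π hπ ρ hρ hne
    refine Finset.disjoint_left.mpr fun Y hY1 hY2 => hne ?_
    simp only [Fintype.mem_piFinset, mem_filter, mem_univ, true_and] at hY1 hY2
    funext k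
    rw [← (hY1 k).2, ← (hY2 k).2]
end

section
/- For all natural numbers m, n, w, d with w ≤ m and d ≥ 1, A(m,n,w,d) · V ≥ (Nat.choose m w)^n, where V is the maximum, over all X ∈ J(m,w)^n, of the number of words Y ∈ J(m,w)^n whose Hamming distance from X is at most 2(d−1). -/
open Finset

lemma cardWeight (m w : ℕ) :
    (univ.filter fun x : Fin m → ZMod 2 => hammingNorm x = w).card = m.choose w := by
  have h1 : ∀ a : ZMod 2, a ≠ 0 → a = 1 := by decide
  rw [show m.choose w = (Finset.powersetCard w (univ : Finset (Fin m))).card by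
    rw [Finset.card_powersetCard, Finset.card_univ, Fintype.card_fin]]
  apply Finset.card_bij' (fun x _ => univ.filter fun i => x i ≠ 0)
    (fun s _ => fun i => if i ∈ s then (1 : ZMod 2) else 0)
  case hi =>
    intro x hx
    simp only [mem_filter, mem_univ, true_and] at hx
    rw [Finset.mem_powersetCard_univ]
    exact hx
  case hj =>
    intro s hs
    rw [Finset.mem_powersetCard_univ] at hs
    simp only [mem_filter, mem_univ, true_and]
    rw [← hs]
    unfold hammingNorm
    congr 1
    ext i
    simp only [mem_filter, mem_univ, true_and]
    split <;> simp_all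
  case left_inv =>
    intro x hx
    funext i
    simp only [mem_filter, mem_univ, true_and]
    by_cases h : x i ≠ 0
    · rw [if_pos h]; exact (h1 _ h).symm
    · rw [if_neg h]; exact (not_not.mp h).symm
  case right_inv =>
    intro s hs
    ext i
    simp only [mem_filter, mem_univ, true_and]
    split <;> simp_all

lemma evenDist {m : ℕ} (w : ℕ) (x y : Fin m → ZMod 2) (hx : hammingNorm x = w)
    (hy : hammingNorm y = w) : Even (hammingDist x y) := by
  classical
  set A := univ.filter fun i => x i ≠ 0 with hA
  set B := univ.filter fun i => y i ≠ 0 with hB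
  have hd : hammingDist x y = (symmDiff A B).card := by
    unfold hammingDist
    congr 1
    ext i
    simp only [hA, hB, Finset.mem_symmDiff, mem_filter, mem_univ, true_and]
    have : ∀ a b : ZMod 2, (a ≠ b) ↔ ((a ≠ 0 ∧ ¬b ≠ 0) ∨ (b ≠ 0 ∧ ¬a ≠ 0)) := by decide
    exact this (x i) (y i)
  have hcard : (symmDiff A B).card + 2 * (A ∩ B).card = A.card + B.card := by
    have hsd : symmDiff A B = (A \ B) ∪ (B \ A) := by
      ext i; simp [Finset.mem_symmDiff, Finset.mem_sdiff, Finset.mem_union]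
    have hdisj : Disjoint (A \ B) (B \ A) := by
      rw [Finset.disjoint_left]; intro i hi hj
      simp only [Finset.mem_sdiff] at hi hj; exact hj.2 hi.1
    rw [hsd, Finset.card_union_of_disjoint hdisj]
    have e1 := Finset.card_sdiff_add_card_inter A B
    have e2 := Finset.card_sdiff_add_card_inter B A
    rw [Finset.inter_comm B A] at e2
    have h1 : (A ∩ B).card ≤ A.card := Finset.card_le_card (Finset.inter_subset_left)
    have h2 : (A ∩ B).card ≤ B.card := Finset.card_le_card (Finset.inter_subset_right)
    omega
  have hAB : A.card = B.card := by
    unfold hammingNorm at hx hy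
    simp only [hA, hB]
    omega
  rw [hd]
  refine ⟨A.card - (A ∩ B).card, by omega⟩

lemma arrDist_comm {m n : ℕ} (X Y : Fin n → Fin m → ZMod 2) : arrDist X Y = arrDist Y X := by
  unfold arrDist; simp [hammingDist_comm]

lemma arrDist_self {m n : ℕ} (X : Fin n → Fin m → ZMod 2) : arrDist X X = 0 := by
  simp [arrDist]

lemma evenArr {m n w : ℕ} (X Y : Fin n → Fin m → ZMod 2)
    (hX : ∀ k, hammingNorm (X k) = w) (hY : ∀ k, hammingNorm (Y k) = w) :
    Even (arrDist X Y) := by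
  unfold arrDist
  exact Finset.even_sum _ fun k _ => evenDist w _ _ (hX k) (hY k)

theorem gilbert_bound_CWAC (m n w d : ℕ) (hw : w ≤ m) (hd : 1 ≤ d) :
    (Nat.choose m w) ^ n ≤
      Amax m n w d *
        sSup { c | ∃ X : Fin n → Fin m → ZMod 2, (∀ k, hammingNorm (X k) = w) ∧
          c = (Finset.univ.filter (fun Y : Fin n → Fin m → ZMod 2 =>
            (∀ k, hammingNorm (Y k) = w) ∧ arrDist X Y ≤ 2 * (d - 1))).card } := by
  classical
  set ball : (Fin n → Fin m → ZMod 2) → Finset (Fin n → Fin m → ZMod 2) :=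
    fun X => Finset.univ.filter (fun Y : Fin n → Fin m → ZMod 2 =>
      (∀ k, hammingNorm (Y k) = w) ∧ arrDist X Y ≤ 2 * (d - 1)) with hball
  set SV : Set ℕ := { c | ∃ X : Fin n → Fin m → ZMod 2, (∀ k, hammingNorm (X k) = w) ∧
      c = (ball X).card } with hSV
  set SA : Set ℕ := { c | ∃ C : Finset (Fin n → Fin m → ZMod 2),
      isCWAC m n w d C ∧ C.card = c } with hSA
  -- a single weight-w vector exists
  have hx0 : ∃ x0 : Fin m → ZMod 2, hammingNorm x0 = w := by
    have hpos : 0 < (univ.filter fun x : Fin m → ZMod 2 => hammingNorm x = w).card := by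
      rw [cardWeight]; exact Nat.choose_pos hw
    obtain ⟨x0, hx0⟩ := Finset.card_pos.mp hpos
    exact ⟨x0, (Finset.mem_filter.mp hx0).2⟩
  obtain ⟨x0, hx0⟩ := hx0
  have hSAne : SA.Nonempty := by
    refine ⟨1, {fun _ => x0}, ⟨⟨_, Finset.mem_singleton_self _⟩, ?_, ?_⟩, Finset.card_singleton _⟩
    · intro X hX k; rw [Finset.mem_singleton] at hX; rw [hX]; exact hx0
    · intro X hX Y hY hXY
      rw [Finset.mem_singleton] at hX hY
      exact absurd (hX.trans hY.symm) hXY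
  have hSAbdd : BddAbove SA := by
    refine ⟨Fintype.card (Fin n → Fin m → ZMod 2), fun c hc => ?_⟩
    obtain ⟨C, _, hc⟩ := hc
    exact hc ▸ Finset.card_le_univ C
  have hSVbdd : BddAbove SV := by
    refine ⟨Fintype.card (Fin n → Fin m → ZMod 2), fun c hc => ?_⟩
    obtain ⟨X, _, hc⟩ := hc
    exact hc ▸ Finset.card_le_univ _
  -- maximal code
  have hAmem : Amax m n w d ∈ SA := Nat.sSup_mem hSAne hSAbdd
  obtain ⟨C, hC, hCcard⟩ := hAmem
  obtain ⟨hCne, hCw, hCd⟩ := hC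
  -- covering
  set J : Finset (Fin n → Fin m → ZMod 2) :=
    univ.filter (fun X => ∀ k, hammingNorm (X k) = w) with hJ
  have hcover : J ⊆ C.biUnion ball := by
    intro Z hZ
    have hZw : ∀ k, hammingNorm (Z k) = w := (Finset.mem_filter.mp hZ).2
    by_contra hnot
    rw [Finset.mem_biUnion] at hnot
    push_neg at hnot
    have hfar : ∀ X ∈ C, 2 * d ≤ arrDist X Z := by
      intro X hX
      have h1 : ¬ (arrDist X Z ≤ 2 * (d - 1)) := by
        intro hle
        exact hnot X hX (Finset.mem_filter.mpr ⟨Finset.mem_univ _, hZw, hle⟩)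
      have h2 : Even (arrDist X Z) := evenArr X Z (hCw X hX) hZw
      obtain ⟨r, hr⟩ := h2
      omega
    have hZC : Z ∉ C := by
      intro hZC
      have := hfar Z hZC
      rw [arrDist_self] at this
      omega
    have hC' : isCWAC m n w d (insert Z C) := by
      refine ⟨⟨Z, Finset.mem_insert_self _ _⟩, ?_, ?_⟩
      · intro X hX k
        rcases Finset.mem_insert.mp hX with h | h
        · rw [h]; exact hZw k
        · exact hCw X h k
      · intro X hX Y hY hXY
        rcases Finset.mem_insert.mp hX with h | h <;>
          rcases Finset.mem_insert.mp hY with h' | h'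
        · exact absurd (h.trans h'.symm) hXY
        · rw [h, arrDist_comm]; exact hfar Y h'
        · rw [h']; exact hfar X h
        · exact hCd X h Y h' hXY
    have hle : (insert Z C).card ≤ Amax m n w d :=
      le_csSup hSAbdd ⟨insert Z C, hC', rfl⟩
    rw [Finset.card_insert_of_notMem hZC, hCcard] at hle
    omega
  -- count J
  have hJcard : J.card = (Nat.choose m w) ^ n := by
    have : J = Fintype.piFinset (fun _ : Fin n =>
        univ.filter fun x : Fin m → ZMod 2 => hammingNorm x = w) := by
      ext X
      simp [hJ, Fintype.mem_piFinset]
    rw [this, Fintype.card_piFinset]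
    simp [cardWeight]
  -- ball bound
  have hballV : ∀ X ∈ C, (ball X).card ≤ sSup SV := by
    intro X hX
    exact le_csSup hSVbdd ⟨X, hCw X hX, rfl⟩
  calc (Nat.choose m w) ^ n = J.card := hJcard.symm
    _ ≤ (C.biUnion ball).card := Finset.card_le_card hcover
    _ ≤ ∑ X ∈ C, (ball X).card := Finset.card_biUnion_le
    _ ≤ ∑ _X ∈ C, sSup SV := Finset.sum_le_sum hballV
    _ = C.card * sSup SV := by rw [Finset.sum_const, smul_eq_mul]
    _ = Amax m n w d * sSup SV := by rw [hCcard]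
end

section
/- For all natural numbers m, n, w, d, a, m', w' with a ≥ 1, a·m' ≤ m, a·w' ≤ w, and w ≤ a·w' + m − a·m', we have A(m, n, w, d) ≥ A(m', a·n, w', d). -/
open Finset

/-! Concatenating, for each `k < n`, the `a` rows of a word of `J(m',w')^(a n)` that sit at the
indices `(q, k)`, `q < a`, and padding with a fixed vector of length `m - a m'` and weight
`w - a w'` maps `J(m',w')^(a n)` into `J(m,w)^n` and preserves Hamming distances. It therefore
carries codes to codes of the same size and minimum distance. -/

section Hamming

variable {ι κ β : Type*} [Fintype ι] [Fintype κ] [DecidableEq β]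

lemma hammingDist_comp_equiv (e : κ ≃ ι) (x y : ι → β) :
    hammingDist (x ∘ e) (y ∘ e) = hammingDist x y := by
  simp only [hammingDist, card_filter]
  exact e.sum_comp fun i => if x i ≠ y i then 1 else 0

lemma hammingDist_sumElim (x₁ y₁ : ι → β) (x₂ y₂ : κ → β) :
    hammingDist (Sum.elim x₁ x₂) (Sum.elim y₁ y₂) = hammingDist x₁ y₁ + hammingDist x₂ y₂ := by
  simp only [hammingDist, card_filter, Fintype.sum_sum_type, Sum.elim_inl, Sum.elim_inr]
  rfl

lemma hammingDist_uncurry (x y : ι → κ → β) :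
    hammingDist (Function.uncurry x) (Function.uncurry y) = ∑ i, hammingDist (x i) (y i) := by
  simp only [hammingDist, card_filter, Fintype.sum_prod_type, Function.uncurry_apply_pair]
  rfl

variable [Zero β]

lemma hammingNorm_comp_equiv (e : κ ≃ ι) (x : ι → β) : hammingNorm (x ∘ e) = hammingNorm x := by
  rw [← hammingDist_zero_right, ← hammingDist_zero_right, ← hammingDist_comp_equiv e x 0]
  rfl

lemma hammingNorm_sumElim (x₁ : ι → β) (x₂ : κ → β) :
    hammingNorm (Sum.elim x₁ x₂) = hammingNorm x₁ + hammingNorm x₂ := by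
  simp only [← hammingDist_zero_right, ← hammingDist_sumElim, Sum.elim_zero_zero]

lemma hammingNorm_uncurry (x : ι → κ → β) :
    hammingNorm (Function.uncurry x) = ∑ i, hammingNorm (x i) := by
  simp only [← hammingDist_zero_right, ← hammingDist_uncurry]
  rfl

lemma exists_hammingNorm_eq [One β] [NeZero (1 : β)] {t : ℕ} (ht : t ≤ Fintype.card ι) :
    ∃ x : ι → β, hammingNorm x = t := by
  classical
  obtain ⟨s, -, hs⟩ := exists_subset_card_eq (s := (univ : Finset ι)) ht
  refine ⟨fun i => if i ∈ s then 1 else 0, ?_⟩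
  simp [hammingNorm, hs]

end Hamming

lemma eq_of_arrDist_eq_zero {m n : ℕ} {X Y : Fin n → Fin m → ZMod 2} (h : arrDist X Y = 0) :
    X = Y :=
  funext fun k => hammingDist_eq_zero.1 <| (sum_eq_zero_iff.1 h) k (mem_univ k)

lemma isCWAC.image {m n w d m' n' w' : ℕ} {C : Finset (Fin n' → Fin m' → ZMod 2)}
    (hC : isCWAC m' n' w' d C) (f : (Fin n' → Fin m' → ZMod 2) → Fin n → Fin m → ZMod 2)
    (hf : ∀ X Y, arrDist (f X) (f Y) = arrDist X Y)
    (hfw : ∀ X, (∀ k, hammingNorm (X k) = w') → ∀ k, hammingNorm (f X k) = w) :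
    isCWAC m n w d (C.image f) := by
  obtain ⟨hne, hwt, hdist⟩ := hC
  refine ⟨hne.image f, ?_, ?_⟩
  · simp only [mem_image, forall_exists_index, and_imp, forall_apply_eq_imp_iff₂]
    exact fun X hX => hfw X (hwt X hX)
  · simp only [mem_image, forall_exists_index, and_imp, forall_apply_eq_imp_iff₂, hf]
    exact fun X hX Y hY hXY => hdist X hX Y hY fun h => hXY (congrArg f h)

lemma Amax_le_Amax_of_isometry {m n w d m' n' w' : ℕ}
    (f : (Fin n' → Fin m' → ZMod 2) → Fin n → Fin m → ZMod 2)
    (hf : ∀ X Y, arrDist (f X) (f Y) = arrDist X Y)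
    (hfw : ∀ X, (∀ k, hammingNorm (X k) = w') → ∀ k, hammingNorm (f X k) = w) :
    Amax m' n' w' d ≤ Amax m n w d := by
  have hinj : Function.Injective f := fun X Y h =>
    eq_of_arrDist_eq_zero (by rw [← hf, h]; exact sum_eq_zero fun k _ => hammingDist_self _)
  refine csSup_le_csSup' ⟨Fintype.card (Fin n → Fin m → ZMod 2), ?_⟩ ?_
  · rintro c ⟨C, -, rfl⟩
    exact card_le_univ C
  · rintro c ⟨C, hC, rfl⟩
    exact ⟨C.image f, hC.image f hf hfw, card_image_of_injective C hinj⟩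

def padBlocks {m n a m' l : ℕ} (E : (Fin a × Fin m') ⊕ Fin l ≃ Fin m) (pad : Fin l → ZMod 2)
    (X : Fin (a * n) → Fin m' → ZMod 2) : Fin n → Fin m → ZMod 2 :=
  fun k => Sum.elim (Function.uncurry fun q => X (finProdFinEquiv (q, k))) pad ∘ E.symm

section padBlocks

variable {m n a m' l : ℕ} (E : (Fin a × Fin m') ⊕ Fin l ≃ Fin m) (pad : Fin l → ZMod 2)

lemma arrDist_padBlocks (X Y : Fin (a * n) → Fin m' → ZMod 2) :
    arrDist (padBlocks E pad X) (padBlocks E pad Y) = arrDist X Y := by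
  simp only [arrDist, padBlocks, hammingDist_comp_equiv, hammingDist_sumElim, hammingDist_self,
    add_zero, hammingDist_uncurry]
  rw [sum_comm, ← Fintype.sum_prod_type']
  exact Fintype.sum_equiv finProdFinEquiv _ _ fun _ => rfl

lemma hammingNorm_padBlocks {w' : ℕ} {X : Fin (a * n) → Fin m' → ZMod 2}
    (hX : ∀ k, hammingNorm (X k) = w') (k : Fin n) :
    hammingNorm (padBlocks E pad X k) = a * w' + hammingNorm pad := by
  simp [padBlocks, hammingNorm_comp_equiv, hammingNorm_sumElim, hammingNorm_uncurry, hX]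

end padBlocks

theorem Amax_embedding_general (m n w d a m' w' : ℕ)
    (hm : a * m' ≤ m) (hw : a * w' ≤ w) (hw2 : w ≤ a * w' + m - a * m') :
    Amax m' (a * n) w' d ≤ Amax m n w d := by
  obtain ⟨pad, hpad⟩ :=
    exists_hammingNorm_eq (β := ZMod 2) (ι := Fin (m - a * m')) (t := w - a * w') (by simp; omega)
  let E : (Fin a × Fin m') ⊕ Fin (m - a * m') ≃ Fin m := Fintype.equivFinOfCardEq (by simp; omega)
  refine Amax_le_Amax_of_isometry (padBlocks E pad) (arrDist_padBlocks E pad) fun X hX k => ?_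
  rw [hammingNorm_padBlocks E pad hX, hpad]
  omega

theorem Amax_embedding (m n w d a m' w' : ℕ)
    (ha : 1 ≤ a) (hm : a * m' ≤ m) (hw : a * w' ≤ w) (hw2 : w ≤ a * w' + m - a * m') :
    Amax m' (a * n) w' d ≤ Amax m n w d :=
  Amax_embedding_general m n w d a m' w' hm hw hw2
end

section
/- For all natural numbers m, n, w, d with 1 ≤ w ≤ m, we have C(⌊m/w⌋, n·w, d) ≤ A(m, n, w, d) ≤ B(m·n, n·w, d). -/
open Finset

lemma phi_div {q j a : ℕ} (hq : 0 < q) (ha : a < q) : (j * q + a) / q = j := by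
  rw [add_comm, mul_comm, Nat.add_mul_div_left _ _ hq, Nat.div_eq_of_lt ha, zero_add]

lemma phi_mod {q j a : ℕ} (ha : a < q) : (j * q + a) % q = a := by
  rw [add_comm, mul_comm, Nat.add_mul_mod_self_left, Nat.mod_eq_of_lt ha]

lemma phi_lt {q w m j a : ℕ} (hwq : w * q ≤ m) (hj : j < w) (ha : a < q) :
    j * q + a < m := by
  have h1 : j * q + a < (j + 1) * q := by
    have : (j+1)*q = j*q+q := by ring
    omega
  have h2 : (j + 1) * q ≤ w * q := Nat.mul_le_mul_right q hj
  omega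


lemma sum_restrict {m q w : ℕ} (hq : 0 < q) (hwq : w * q ≤ m) (f : Fin m → ℕ)
    (hf : ∀ i : Fin m, ¬ ((i : ℕ) / q < w) → f i = 0) :
    ∑ i, f i = ∑ j : Fin w, ∑ a : Fin q,
      f ⟨(j : ℕ) * q + (a : ℕ), phi_lt hwq j.isLt a.isLt⟩ := by
  set φ : Fin w × Fin q → Fin m := fun p => ⟨(p.1 : ℕ) * q + (p.2 : ℕ), phi_lt hwq p.1.isLt p.2.isLt⟩ with hφ
  have key : ∑ i, f i = ∑ p : Fin w × Fin q, f (φ p) := by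
    rw [← Finset.sum_image (s := (univ : Finset (Fin w × Fin q))) (g := φ) (f := f) ?hinj]
    · refine (Finset.sum_subset (Finset.subset_univ _) ?_).symm
      intro i _ hi
      refine hf i (fun hlt => hi ?_)
      refine Finset.mem_image.mpr ⟨(⟨(i:ℕ)/q, hlt⟩, ⟨(i:ℕ)%q, Nat.mod_lt _ hq⟩), mem_univ _, ?_⟩
      apply Fin.ext
      show (i:ℕ)/q * q + (i:ℕ)%q = (i:ℕ)
      rw [mul_comm]
      exact Nat.div_add_mod _ _
    · intro p _ p' _ h
      have hv : (p.1 : ℕ) * q + (p.2 : ℕ) = (p'.1 : ℕ) * q + (p'.2 : ℕ) := congrArg Fin.val h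
      have d1 : ((p.1:ℕ) * q + (p.2:ℕ)) / q = (p.1:ℕ) := phi_div hq p.2.isLt
      have d2 : ((p'.1:ℕ) * q + (p'.2:ℕ)) / q = (p'.1:ℕ) := phi_div hq p'.2.isLt
      rw [hv] at d1
      have h1 : (p.1 : ℕ) = (p'.1 : ℕ) := d1.symm.trans d2
      have h2 : (p.2 : ℕ) = (p'.2 : ℕ) := by
        rw [h1] at hv; omega
      exact Prod.ext (Fin.ext h1) (Fin.ext h2)
  rw [key, Fintype.sum_prod_type]

def enc (q m n w : ℕ) (x : Fin (n * w) → Fin q) : Fin n → Fin m → ZMod 2 :=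
  fun k i => if h : (i : ℕ) / q < w then
      (if (i : ℕ) % q = (x (finProdFinEquiv (k, ⟨(i : ℕ) / q, h⟩)) : ℕ) then 1 else 0)
    else 0

lemma enc_zero {q m n w : ℕ} (x : Fin (n * w) → Fin q) (k : Fin n) (i : Fin m)
    (h : ¬ ((i : ℕ) / q < w)) : enc q m n w x k i = 0 := dif_neg h

lemma enc_apply {q m n w : ℕ} (hq : 0 < q) (hwq : w * q ≤ m) (x : Fin (n * w) → Fin q)
    (k : Fin n) (j : Fin w) (a : Fin q) :
    enc q m n w x k ⟨(j : ℕ) * q + (a : ℕ), phi_lt hwq j.isLt a.isLt⟩ =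
      if a = x (finProdFinEquiv (k, j)) then 1 else 0 := by
  have hd : ((j:ℕ) * q + (a:ℕ)) / q = (j : ℕ) := phi_div hq a.isLt
  have hm : ((j:ℕ) * q + (a:ℕ)) % q = (a : ℕ) := phi_mod a.isLt
  simp only [enc, hd, hm]
  rw [dif_pos j.isLt]
  simp [Fin.val_inj]

lemma pair_sum {q : ℕ} (c c' : Fin q) :
    ∑ a : Fin q, (if (if a = c then (1:ZMod 2) else 0) ≠ (if a = c' then 1 else 0)
      then 1 else 0) = if c = c' then 0 else 2 := by
  by_cases h : c = c'
  · subst h; simp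
  · rw [if_neg h]
    have key : ∀ a : Fin q,
        (if (if a = c then (1:ZMod 2) else 0) ≠ (if a = c' then 1 else 0) then (1:ℕ) else 0)
        = (if a = c then 1 else 0) + (if a = c' then 1 else 0) := by
      intro a
      by_cases h1 : a = c <;> by_cases h2 : a = c' <;>
        simp_all [one_ne_zero]
    simp only [key, Finset.sum_add_distrib, Finset.sum_ite_eq' univ, mem_univ, if_true]

lemma enc_norm {q m n w : ℕ} (hq : 0 < q) (hwq : w * q ≤ m) (x : Fin (n * w) → Fin q)
    (k : Fin n) : hammingNorm (enc q m n w x k) = w := by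
  rw [hammingNorm, Finset.card_filter]
  rw [sum_restrict hq hwq _ (fun i h => by simp [enc_zero x k i h])]
  have : ∀ (j : Fin w) (a : Fin q),
      (if enc q m n w x k ⟨(j : ℕ) * q + (a : ℕ), phi_lt hwq j.isLt a.isLt⟩ ≠ 0 then (1:ℕ) else 0)
      = if a = x (finProdFinEquiv (k, j)) then 1 else 0 := by
    intro j a
    rw [enc_apply hq hwq]
    by_cases h : a = x (finProdFinEquiv (k, j)) <;> simp [h]
  simp only [this, Finset.sum_ite_eq' univ, mem_univ, if_true]
  simp

lemma enc_dist {q m n w : ℕ} (hq : 0 < q) (hwq : w * q ≤ m)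
    (x y : Fin (n * w) → Fin q) :
    arrDist (enc q m n w x) (enc q m n w y) = 2 * hammingDist x y := by
  have row : ∀ k : Fin n, hammingDist (enc q m n w x k) (enc q m n w y k)
      = ∑ j : Fin w, if x (finProdFinEquiv (k, j)) = y (finProdFinEquiv (k, j)) then 0 else 2 := by
    intro k
    rw [hammingDist, Finset.card_filter]
    rw [sum_restrict hq hwq _ (fun i h => by simp [enc_zero x k i h, enc_zero y k i h])]
    refine Finset.sum_congr rfl fun j _ => ?_
    have : ∀ a : Fin q,
        (if enc q m n w x k ⟨(j:ℕ)*q+(a:ℕ), phi_lt hwq j.isLt a.isLt⟩ ≠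
            enc q m n w y k ⟨(j:ℕ)*q+(a:ℕ), phi_lt hwq j.isLt a.isLt⟩ then (1:ℕ) else 0)
        = (if (if a = x (finProdFinEquiv (k, j)) then (1:ZMod 2) else 0) ≠
            (if a = y (finProdFinEquiv (k, j)) then 1 else 0) then 1 else 0) := by
      intro a; rw [enc_apply hq hwq, enc_apply hq hwq]
    simp only [this]
    exact pair_sum _ _
  simp only [arrDist, row]
  have step : ∀ (k : Fin n) (j : Fin w),
      (if x (finProdFinEquiv (k, j)) = y (finProdFinEquiv (k, j)) then (0:ℕ) else 2)
      = 2 * (if x (finProdFinEquiv (k, j)) ≠ y (finProdFinEquiv (k, j)) then 1 else 0) := by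
    intro k j; by_cases h : x (finProdFinEquiv (k, j)) = y (finProdFinEquiv (k, j)) <;> simp [h]
  simp only [step, ← Finset.mul_sum]
  congr 1
  rw [hammingDist, Finset.card_filter]
  rw [← Equiv.sum_comp (finProdFinEquiv : Fin n × Fin w ≃ Fin (n * w))
    (fun p => if x p ≠ y p then (1:ℕ) else 0)]
  rw [Fintype.sum_prod_type]

lemma enc_inj {q m n w : ℕ} (hq : 0 < q) (hwq : w * q ≤ m) :
    Function.Injective (enc q m n w) := by
  intro x y h
  have h0 : arrDist (enc q m n w x) (enc q m n w y) = 0 := by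
    simp [arrDist, h]
  rw [enc_dist hq hwq] at h0
  have : hammingDist x y = 0 := by omega
  exact hammingDist_eq_zero.mp this

def flat {m n : ℕ} (X : Fin n → Fin m → ZMod 2) : Fin (m * n) → ZMod 2 :=
  fun i => X (finProdFinEquiv.symm i).2 (finProdFinEquiv.symm i).1

lemma flat_dist {m n : ℕ} (X Y : Fin n → Fin m → ZMod 2) :
    hammingDist (flat X) (flat Y) = arrDist X Y := by
  rw [hammingDist, Finset.card_filter, arrDist]
  rw [← Equiv.sum_comp (finProdFinEquiv : Fin m × Fin n ≃ Fin (m * n))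
    (fun i => if flat X i ≠ flat Y i then (1:ℕ) else 0)]
  simp only [flat, Equiv.symm_apply_apply]
  rw [Fintype.sum_prod_type, Finset.sum_comm]
  refine Finset.sum_congr rfl fun k _ => ?_
  rw [hammingDist, Finset.card_filter]

lemma flat_norm {m n : ℕ} (X : Fin n → Fin m → ZMod 2) :
    hammingNorm (flat X) = ∑ k, hammingNorm (X k) := by
  rw [hammingNorm, Finset.card_filter]
  rw [← Equiv.sum_comp (finProdFinEquiv : Fin m × Fin n ≃ Fin (m * n))
    (fun i => if flat X i ≠ 0 then (1:ℕ) else 0)]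
  simp only [flat, Equiv.symm_apply_apply]
  rw [Fintype.sum_prod_type, Finset.sum_comm]
  refine Finset.sum_congr rfl fun k _ => ?_
  rw [hammingNorm, Finset.card_filter]

lemma flat_inj {m n : ℕ} : Function.Injective (flat (m := m) (n := n)) := by
  intro X Y h
  funext k a
  have := congrFun h (finProdFinEquiv (a, k))
  simpa [flat] using this

theorem C_le_A_le_B (m n w d : ℕ) (hw : 1 ≤ w) (hwm : w ≤ m) :
    Cmax (m / w) (n * w) d ≤ Amax m n w d ∧ Amax m n w d ≤ Bmax (m * n) (n * w) d := by
  set q := m / w with hqdef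
  have hq : 0 < q := Nat.div_pos hwm hw
  have hwq : w * q ≤ m := by rw [mul_comm]; exact Nat.div_mul_le_self m w
  set SC := { c | ∃ C : Finset (Fin (n * w) → Fin q), C.Nonempty ∧
    (∀ x ∈ C, ∀ y ∈ C, x ≠ y → d ≤ hammingDist x y) ∧ C.card = c } with hSC
  set SA := { c | ∃ C : Finset (Fin n → Fin m → ZMod 2), isCWAC m n w d C ∧ C.card = c }
    with hSA
  set SB := { c | ∃ C : Finset (Fin (m * n) → ZMod 2), C.Nonempty ∧
    (∀ x ∈ C, hammingNorm x = n * w) ∧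
    (∀ x ∈ C, ∀ y ∈ C, x ≠ y → 2 * d ≤ hammingDist x y) ∧ C.card = c } with hSB
  have hCA : SC ⊆ SA := by
    rintro c ⟨C, hne, hdist, rfl⟩
    refine ⟨C.image (enc q m n w), ⟨hne.image _, ?_, ?_⟩, Finset.card_image_of_injective _ (enc_inj hq hwq)⟩
    · rintro X hX k
      obtain ⟨x, hx, rfl⟩ := Finset.mem_image.mp hX
      exact enc_norm hq hwq x k
    · rintro X hX Y hY hXY
      obtain ⟨x, hx, rfl⟩ := Finset.mem_image.mp hX
      obtain ⟨y, hy, rfl⟩ := Finset.mem_image.mp hY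
      have hxy : x ≠ y := fun h => hXY (by rw [h])
      rw [enc_dist hq hwq]
      exact Nat.mul_le_mul_left 2 (hdist x hx y hy hxy)
  have hAB : SA ⊆ SB := by
    rintro c ⟨C, ⟨hne, hrow, hdist⟩, rfl⟩
    refine ⟨C.image flat, hne.image _, ?_, ?_, Finset.card_image_of_injective _ flat_inj⟩
    · rintro x hx
      obtain ⟨X, hX, rfl⟩ := Finset.mem_image.mp hx
      rw [flat_norm]
      simp [hrow X hX, mul_comm]
    · rintro x hx y hy hxy
      obtain ⟨X, hX, rfl⟩ := Finset.mem_image.mp hx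
      obtain ⟨Y, hY, rfl⟩ := Finset.mem_image.mp hy
      have hXY : X ≠ Y := fun h => hxy (by rw [h])
      rw [flat_dist]
      exact hdist X hX Y hY hXY
  have hCne : SC.Nonempty := by
    refine ⟨1, {fun _ => ⟨0, hq⟩}, Finset.singleton_nonempty _, ?_, Finset.card_singleton _⟩
    intro x hx y hy hxy
    rw [Finset.mem_singleton] at hx hy
    exact absurd (hx.trans hy.symm) hxy
  have hBbdd : BddAbove SB := by
    refine ⟨Fintype.card (Fin (m * n) → ZMod 2), ?_⟩
    rintro c ⟨C, _, _, _, rfl⟩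
    exact (Finset.card_le_univ C).trans_eq Finset.card_univ
  have hAbdd : BddAbove SA := by
    refine ⟨Fintype.card (Fin n → Fin m → ZMod 2), ?_⟩
    rintro c ⟨C, _, rfl⟩
    exact (Finset.card_le_univ C).trans_eq Finset.card_univ
  constructor
  · show sSup SC ≤ sSup SA
    exact csSup_le_csSup hAbdd hCne hCA
  · show sSup SA ≤ sSup SB
    exact csSup_le_csSup hBbdd (hCne.mono hCA) hAB
end

section
/- For all natural numbers m, n, w, d, r with w ≤ m, 0 < r ≤ w, and d = (n−1)·w + r, we have A(m, n, w, d) ≤ B(m, w, r). -/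
open Finset

lemma exists_weight_vec (m w : ℕ) (hw : w ≤ m) : ∃ x : Fin m → ZMod 2, hammingNorm x = w := by
  refine ⟨fun i => if (i : ℕ) < w then 1 else 0, ?_⟩
  have h1 : (univ.filter fun i : Fin m => (i:ℕ) < w) = (univ : Finset (Fin w)).map ⟨Fin.castLE hw, Fin.castLE_injective hw⟩ := by
    ext i
    simp only [mem_filter, mem_univ, true_and, mem_map, Function.Embedding.coeFn_mk]
    constructor
    · intro h; exact ⟨⟨i, h⟩, rfl⟩
    · rintro ⟨j, rfl⟩; exact j.isLt
  have : hammingNorm (fun i : Fin m => if (i : ℕ) < w then (1 : ZMod 2) else 0)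
      = (univ.filter fun i : Fin m => (i:ℕ) < w).card := by
    unfold hammingNorm
    congr 1
    ext i
    by_cases h : (i : ℕ) < w <;> simp [h]
  rw [this, h1, card_map, card_univ, Fintype.card_fin]

lemma one_le_Bmax (m w r : ℕ) (hw : w ≤ m) : 1 ≤ Bmax m w r := by
  obtain ⟨x, hx⟩ := exists_weight_vec m w hw
  have hmem : (1 : ℕ) ∈ { c | ∃ C : Finset (Fin m → ZMod 2), C.Nonempty ∧
      (∀ x ∈ C, hammingNorm x = w) ∧
      (∀ x ∈ C, ∀ y ∈ C, x ≠ y → 2 * r ≤ hammingDist x y) ∧ C.card = c } := by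
    refine ⟨{x}, singleton_nonempty x, ?_, ?_, card_singleton x⟩
    · intro y hy; rw [mem_singleton] at hy; subst hy; exact hx
    · intro a ha b hb hab
      rw [mem_singleton] at ha hb; subst ha; subst hb; exact absurd rfl hab
  exact le_csSup ⟨Fintype.card (Fin m → ZMod 2), by
    rintro c ⟨C, _, _, _, rfl⟩; exact C.card_le_univ.trans_eq (card_univ)⟩ hmem

theorem Amax_le_Bmax_high_distance (m n w d r : ℕ) (hw : w ≤ m)
    (hr0 : 0 < r) (hrw : r ≤ w) (hd : d = (n - 1) * w + r) :
    Amax m n w d ≤ Bmax m w r := by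
  refine csSup_le' ?_
  rintro c ⟨C, ⟨hne, hwt, hdist⟩, rfl⟩
  rcases Nat.eq_zero_or_pos n with hn | hn
  · subst hn
    have hcard : C.card ≤ 1 := by
      haveI : Subsingleton (Fin 0 → Fin m → ZMod 2) := by
        constructor; intro a b; funext k; exact k.elim0
      exact Finset.card_le_one_of_subsingleton C
    exact hcard.trans (one_le_Bmax m w r hw)
  · set k0 : Fin n := ⟨0, hn⟩
    set f : (Fin n → Fin m → ZMod 2) → (Fin m → ZMod 2) := fun X => X k0 with hf
    -- key distance estimate
    have key : ∀ X ∈ C, ∀ Y ∈ C, X ≠ Y → 2 * r ≤ hammingDist (X k0) (Y k0) := by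
      intro X hX Y hY hXY
      have hsum : arrDist X Y = hammingDist (X k0) (Y k0)
          + ∑ k ∈ univ.erase k0, hammingDist (X k) (Y k) := by
        rw [arrDist, ← Finset.add_sum_erase _ _ (mem_univ k0)]
      have hbd : ∑ k ∈ univ.erase k0, hammingDist (X k) (Y k) ≤ (n - 1) * (2 * w) := by
        have := Finset.sum_le_card_nsmul (univ.erase k0)
          (fun k => hammingDist (X k) (Y k)) (2 * w) ?_
        · simpa [card_erase_of_mem, card_univ, smul_eq_mul] using this
        · intro k _
          calc hammingDist (X k) (Y k) ≤ hammingDist (X k) 0 + hammingDist 0 (Y k) :=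
                hammingDist_triangle _ _ _
          _ = hammingNorm (X k) + hammingNorm (Y k) := by
                rw [hammingDist_zero_right, hammingDist_zero_left]
          _ = 2 * w := by rw [hwt X hX k, hwt Y hY k]; ring
      have hlow : 2 * d ≤ arrDist X Y := hdist X hX Y hY hXY
      have : 2 * ((n-1) * w + r) ≤ hammingDist (X k0) (Y k0) + (n-1) * (2*w) := by
        calc 2 * ((n-1)*w + r) = 2 * d := by rw [hd]
        _ ≤ arrDist X Y := hlow
        _ = _ := hsum
        _ ≤ _ := by omega
      have hrw2 : 2 * ((n-1)*w + r) = 2*r + (n-1)*(2*w) := by ring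
      omega
    have finj : Set.InjOn f C := by
      intro X hX Y hY hfeq
      by_contra hne'
      have h2r := key X hX Y hY hne'
      rw [hf] at hfeq
      simp only at hfeq
      rw [hfeq] at h2r
      simp [hammingDist_self] at h2r
      omega
    refine le_csSup ⟨Fintype.card (Fin m → ZMod 2), by
      rintro c ⟨D, _, _, _, rfl⟩; exact D.card_le_univ.trans_eq card_univ⟩ ?_
    refine ⟨C.image f, hne.image f, ?_, ?_, (Finset.card_image_of_injOn finj)⟩
    · intro x hx
      obtain ⟨X, hX, rfl⟩ := mem_image.mp hx
      exact hwt X hX k0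
    · intro x hx y hy hxy
      obtain ⟨X, hX, rfl⟩ := mem_image.mp hx
      obtain ⟨Y, hY, rfl⟩ := mem_image.mp hy
      exact key X hX Y hY (fun h => hxy (by rw [h]))
end

section
/- For all natural numbers m, n, w, d with 1 ≤ w ≤ m, we have A(m, n, w, d) ≤ C(Nat.choose m w, n, ⌈d/w⌉). -/
open Finset

/-- There is an injection from weight-`w` vectors of `GF(2)^m` into `Fin (m.choose w)`. -/
lemma exists_weight_inj (m w : ℕ) :
    ∃ e : {v : Fin m → ZMod 2 // hammingNorm v = w} → Fin (Nat.choose m w),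
      Function.Injective e := by
  have hz : ∀ a : ZMod 2, a ≠ 0 ↔ a = 1 := by decide
  have hcard : Fintype.card {s : Finset (Fin m) // s.card = w} = Nat.choose m w := by
    simpa using Fintype.card_finset_len (α := Fin m) w
  let g : {v : Fin m → ZMod 2 // hammingNorm v = w} → {s : Finset (Fin m) // s.card = w} :=
    fun v => ⟨Finset.univ.filter (fun i => v.1 i ≠ 0), by
      have : (Finset.univ.filter (fun i => v.1 i ≠ 0)).card = hammingNorm v.1 := rfl
      rw [this, v.2]⟩
  have hg : Function.Injective g := by
    intro a b hab
    have hval : Finset.univ.filter (fun i => a.1 i ≠ 0)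
        = Finset.univ.filter (fun i => b.1 i ≠ 0) := congrArg Subtype.val hab
    ext i
    have h := Finset.ext_iff.mp hval i
    simp only [Finset.mem_filter, Finset.mem_univ, true_and] at h
    have ha := hz (a.1 i); have hb := hz (b.1 i)
    by_cases h0 : a.1 i = 0
    · by_cases h1 : b.1 i = 0
      · rw [h0, h1]
      · exact absurd (h.mpr h1) (by simp [h0])
    · rw [ha.mp h0, hb.mp (h.mp h0)]
  obtain ⟨f⟩ := Fintype.truncEquivFinOfCardEq hcard
  exact ⟨fun v => f (g v), fun a b hab => hg (f.injective hab)⟩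

theorem Amax_le_Cmax (m n w d : ℕ) (hw : 1 ≤ w) (hwm : w ≤ m) :
    Amax m n w d ≤ Cmax (Nat.choose m w) n ((d + w - 1) / w) := by
  set q := Nat.choose m w with hq
  have hqpos : 0 < q := Nat.choose_pos hwm
  obtain ⟨e, he⟩ := exists_weight_inj m w
  apply csSup_le'
  rintro c ⟨C, ⟨hCne, hCw, hCd⟩, rfl⟩
  -- map each codeword to a q-ary word
  let F : (Fin n → Fin m → ZMod 2) → (Fin n → Fin q) := fun X k =>
    if h : hammingNorm (X k) = w then e ⟨X k, h⟩ else ⟨0, hqpos⟩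
  have hF : ∀ X, ∀ hX : X ∈ C, ∀ k, F X k = e ⟨X k, hCw X hX k⟩ := by
    intro X hX k
    simp only [F, dif_pos (hCw X hX k)]
  have hFinj : Set.InjOn F C := by
    intro X hX Y hY hXY
    funext k i
    have h1 := congrFun hXY k
    rw [hF X hX k, hF Y hY k] at h1
    have := he h1
    exact congrFun (congrArg Subtype.val this) i
  -- distance property
  have hdist : ∀ X ∈ C, ∀ Y ∈ C, X ≠ Y → (d + w - 1) / w ≤ hammingDist (F X) (F Y) := by
    intro X hX Y hY hne
    have hD : ∀ k, X k ≠ Y k → F X k ≠ F Y k := by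
      intro k hk hFk
      rw [hF X hX k, hF Y hY k] at hFk
      exact hk (congrArg Subtype.val (he hFk))
    set D := hammingDist (F X) (F Y) with hDdef
    -- each column distance is at most 2w, zero if columns equal
    have hcol : ∀ k, hammingDist (X k) (Y k) ≤ (if F X k ≠ F Y k then 2 * w else 0) := by
      intro k
      by_cases hk : X k = Y k
      · simp [hk, hF X hX k, hF Y hY k]
      · rw [if_pos (hD k hk)]
        calc hammingDist (X k) (Y k) ≤ hammingDist (X k) 0 + hammingDist 0 (Y k) :=
              hammingDist_triangle _ _ _
          _ = hammingNorm (X k) + hammingNorm (Y k) := by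
              rw [hammingDist_zero_right, hammingDist_comm, hammingDist_zero_right]
          _ = 2 * w := by rw [hCw X hX k, hCw Y hY k]; ring
    have harr : arrDist X Y ≤ 2 * w * D := by
      calc arrDist X Y ≤ ∑ k, (if F X k ≠ F Y k then 2 * w else 0) :=
            Finset.sum_le_sum (fun k _ => hcol k)
        _ = 2 * w * D := by
            rw [Finset.sum_ite, Finset.sum_const, Finset.sum_const, smul_eq_mul, smul_eq_mul,
              mul_zero, add_zero, mul_comm]
            rfl
    have h2d : 2 * d ≤ 2 * w * D := le_trans (hCd X hX Y hY hne) harr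
    have hdwD : d ≤ w * D :=
      Nat.le_of_mul_le_mul_left (by rw [mul_assoc] at h2d; exact h2d) (by norm_num)
    have hlt : d + w - 1 < w * (D + 1) := by
      have hmul : w * (D + 1) = w * D + w := by ring
      omega
    have := Nat.div_lt_of_lt_mul hlt
    omega
  -- the image code
  have hcardimg : (C.image F).card = C.card := Finset.card_image_of_injOn hFinj
  have hmem : C.card ∈ { c | ∃ C' : Finset (Fin n → Fin q), C'.Nonempty ∧
      (∀ x ∈ C', ∀ y ∈ C', x ≠ y → (d + w - 1) / w ≤ hammingDist x y) ∧ C'.card = c } := by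
    refine ⟨C.image F, hCne.image F, ?_, hcardimg⟩
    intro x hx y hy hxy
    obtain ⟨X, hX, rfl⟩ := Finset.mem_image.mp hx
    obtain ⟨Y, hY, rfl⟩ := Finset.mem_image.mp hy
    exact hdist X hX Y hY (fun h => hxy (by rw [h]))
  have hbdd : BddAbove { c | ∃ C' : Finset (Fin n → Fin q), C'.Nonempty ∧
      (∀ x ∈ C', ∀ y ∈ C', x ≠ y → (d + w - 1) / w ≤ hammingDist x y) ∧ C'.card = c } := by
    refine ⟨Fintype.card (Fin n → Fin q), ?_⟩
    rintro c ⟨C', _, _, rfl⟩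
    exact Finset.card_le_univ C'
  exact le_csSup hbdd hmem
end
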